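/- arXiv:2406.14280 — 6 statements merged into one kernel-verified Lean document; each statement's English description precedes it below -/
import Mathlib

section
/- For every natural number ν and all rational numbers r and κ, one has 2^{2ν+1} · κ · Σ_{j=0}^{ν} (−1)^j C(2ν−j, j) ((r²−κ²)/4)^j r^{2ν−2j} = (κ−r)^{2ν+1} + (κ+r)^{2ν+1}. Equivalently, p_{2ν+2}(r, (r²−κ²)/4) = ((κ−r)^{2ν+1} + (κ+r)^{2ν+1}) / (2^{2ν+1} κ) when κ ≠ 0. -/
private def Asum (m : ℕ) (s p : ℚ) : ℚ :=
  ∑ j ∈ Finset.range (m + 1),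
    (-1 : ℚ) ^ j * (Nat.choose (m - j) j : ℚ) * p ^ j * s ^ (m - 2 * j)

private lemma Asum_rec (m : ℕ) (s p : ℚ) :
    Asum (m + 2) s p = s * Asum (m + 1) s p - p * Asum m s p := by
  unfold Asum
  rw [show m + 2 + 1 = (m + 2) + 1 from rfl, Finset.sum_range_succ,
    Finset.sum_range_succ' _ (m + 1), Finset.sum_range_succ' _ (m + 1),
    mul_add s, Finset.mul_sum, Finset.mul_sum, add_sub_right_comm, ← Finset.sum_sub_distrib]
  have key : ∀ i ∈ Finset.range (m + 1),
      (-1 : ℚ) ^ (i+1) * (Nat.choose (m + 2 - (i+1)) (i+1) : ℚ) * p ^ (i+1) *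
          s ^ (m + 2 - 2 * (i+1)) =
      s * ((-1 : ℚ) ^ (i+1) * (Nat.choose (m + 1 - (i+1)) (i+1) : ℚ) * p ^ (i+1) *
          s ^ (m + 1 - 2 * (i+1))) -
      p * ((-1 : ℚ) ^ i * (Nat.choose (m - i) i : ℚ) * p ^ i * s ^ (m - 2 * i)) := by
    intro i hi
    rw [Finset.mem_range] at hi
    have h1 : m + 2 - (i + 1) = (m - i) + 1 := by omega
    have h2 : m + 1 - (i + 1) = m - i := by omega
    rw [h1, h2, Nat.choose_succ_succ]
    rcases le_or_gt (2 * i + 1) m with h | h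
    · have e1 : m + 2 - 2 * (i + 1) = m - 2 * i := by omega
      have e2 : m + 1 - 2 * (i + 1) = (m - 2 * i) - 1 := by omega
      have e3 : (m - 2 * i - 1) + 1 = m - 2 * i := by omega
      rw [e1, e2]
      have : s * s ^ (m - 2 * i - 1) = s ^ (m - 2 * i) := by
        rw [← pow_succ', e3]
      push_cast
      linear_combination (-(-1 : ℚ) ^ (i + 1) * ((Nat.choose (m - i) (i + 1) : ℚ)) * p ^ (i + 1)) * this
    · have c0 : Nat.choose (m - i) (i + 1) = 0 :=
        Nat.choose_eq_zero_of_lt (by omega)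
      have e1 : m + 2 - 2 * (i + 1) = m - 2 * i := by omega
      rw [c0, e1]
      push_cast
      ring
  rw [Finset.sum_congr rfl key]
  have hz : (Nat.choose (m + 2 - (m + 2)) (m + 2) : ℚ) = 0 := by
    simp [Nat.choose_eq_zero_of_lt]
  rw [hz]
  simp
  ring

private lemma Asum_eq (m : ℕ) (x y : ℚ) :
    (x - y) * Asum m (x + y) (x * y) = x ^ (m + 1) - y ^ (m + 1) := by
  induction m using Nat.twoStepInduction with
  | zero => simp [Asum]
  | one => simp [Asum, Finset.sum_range_succ]; ring
  | more m ih1 ih2 =>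
      rw [Asum_rec]
      linear_combination (x + y) * ih2 - x * y * ih1

/-- For every natural number `ν` and all rational numbers `r` and `κ`,
`2^{2ν+1} κ ∑_{j=0}^{ν} (-1)^j C(2ν-j,j) ((r²-κ²)/4)^j r^{2ν-2j}
  = (κ-r)^{2ν+1} + (κ+r)^{2ν+1}`. -/
theorem pk_special_value_eq (ν : ℕ) (r κ : ℚ) :
    2 ^ (2 * ν + 1) * κ *
        ∑ j ∈ Finset.range (ν + 1),
          (-1 : ℚ) ^ j * (Nat.choose (2 * ν - j) j : ℚ) * ((r ^ 2 - κ ^ 2) / 4) ^ j *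
            r ^ (2 * ν - 2 * j) =
      (κ - r) ^ (2 * ν + 1) + (κ + r) ^ (2 * ν + 1) := by
  set p : ℚ := (r ^ 2 - κ ^ 2) / 4 with hp
  have sum_eq : (∑ j ∈ Finset.range (ν + 1),
      (-1 : ℚ) ^ j * (Nat.choose (2 * ν - j) j : ℚ) * p ^ j * r ^ (2 * ν - 2 * j))
      = Asum (2 * ν) r p := by
    unfold Asum
    apply Finset.sum_subset
    · intro j hj
      rw [Finset.mem_range] at *
      omega
    · intro j hj hnj
      rw [Finset.mem_range] at *
      have : Nat.choose (2 * ν - j) j = 0 := Nat.choose_eq_zero_of_lt (by omega)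
      simp [this]
  have hA : κ * Asum (2 * ν) r p
      = ((r + κ) / 2) ^ (2 * ν + 1) - ((r - κ) / 2) ^ (2 * ν + 1) := by
    have h := Asum_eq (2 * ν) ((r + κ) / 2) ((r - κ) / 2)
    have e1 : (r + κ) / 2 + (r - κ) / 2 = r := by ring
    have e2 : ((r + κ) / 2) * ((r - κ) / 2) = p := by rw [hp]; ring
    have e3 : (r + κ) / 2 - (r - κ) / 2 = κ := by ring
    rw [e1, e2, e3] at h
    exact h
  have hodd : Odd (2 * ν + 1) := ⟨ν, by ring⟩
  calc 2 ^ (2 * ν + 1) * κ * ∑ j ∈ Finset.range (ν + 1),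
          (-1 : ℚ) ^ j * (Nat.choose (2 * ν - j) j : ℚ) * p ^ j * r ^ (2 * ν - 2 * j)
      = 2 ^ (2 * ν + 1) * (((r + κ) / 2) ^ (2 * ν + 1) - ((r - κ) / 2) ^ (2 * ν + 1)) := by
        rw [sum_eq, mul_assoc, hA]
    _ = (2 * ((r + κ) / 2)) ^ (2 * ν + 1) - (2 * ((r - κ) / 2)) ^ (2 * ν + 1) := by
        rw [mul_pow, mul_pow, mul_sub]
    _ = (κ + r) ^ (2 * ν + 1) - (r - κ) ^ (2 * ν + 1) := by
        rw [show (2 : ℚ) * ((r + κ) / 2) = κ + r from by ring,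
          show (2 : ℚ) * ((r - κ) / 2) = r - κ from by ring]
    _ = (κ - r) ^ (2 * ν + 1) + (κ + r) ^ (2 * ν + 1) := by
        rw [show r - κ = -(κ - r) from by ring, hodd.neg_pow]; ring
end

section
/- For all natural numbers ν and l with l ≤ ν, the integer identity Σ_{j=l}^{ν} (−1)^j 4^{ν−j} C(2ν−j, j) C(j, l) = (−1)^l C(2ν+1, 2l+1) holds. -/
open Polynomial Finset

private def aco (ν j : ℕ) : ℤ := (-1)^j * 4^(ν-j) * ((2*ν - j).choose j : ℤ)
private def qco (ν l : ℕ) : ℤ := (-1)^l * ((2*ν+1).choose (2*l+1) : ℤ)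
private noncomputable def Pp (ν : ℕ) : Polynomial ℤ := ∑ j ∈ range (ν+1), C (aco ν j) * (X+1)^j
private noncomputable def Qp (ν : ℕ) : Polynomial ℤ := ∑ l ∈ range (ν+1), C (qco ν l) * X^l

private lemma aco_eq_zero {ν j : ℕ} (h : ν < j) : aco ν j = 0 := by
  simp [aco, Nat.choose_eq_zero_of_lt (show 2*ν - j < j by omega)]

private lemma qco_eq_zero {ν l : ℕ} (h : ν < l) : qco ν l = 0 := by
  simp [qco, Nat.choose_eq_zero_of_lt (show 2*ν+1 < 2*l+1 by omega)]

private lemma peel2 {M : Type*} [AddCommMonoid M] (n : ℕ) (f : ℕ → M) :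
    ∑ j ∈ range (n+2), f j = (∑ j ∈ range n, f (j+2)) + f 1 + f 0 := by
  rw [Finset.sum_range_succ', Finset.sum_range_succ']

private lemma peel1 {M : Type*} [AddCommMonoid M] (n : ℕ) (f : ℕ → M) :
    ∑ j ∈ range (n+1), f j = (∑ j ∈ range n, f (j+1)) + f 0 :=
  Finset.sum_range_succ' f n

-- Pascal helper (P side)
private lemma pasP (n j : ℕ) :
    (n+2).choose (j+2) + n.choose j = 2 * ((n+1).choose (j+1)) + n.choose (j+2) := by
  simp [Nat.choose_succ_succ]; ring

-- Pascal helper (Q side)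
private lemma pasQ (m t : ℕ) :
    (m+4).choose (t+4) + m.choose (t+4) + m.choose t
      = 2*((m+2).choose (t+4)) + 2*((m+2).choose (t+2)) + 2*(m.choose (t+2)) := by
  simp [Nat.choose_succ_succ]; ring

private lemma pasQ1 (m : ℕ) :
    (m+4).choose 3 + m.choose 3 = 2 * ((m+2).choose 3) + 2*(m+2) + 2*m := by
  simp [show (3:ℕ) = 2+1 from rfl, Nat.choose_succ_succ]; ring

-- key coefficient identity, P side
private lemma keyP (ν j : ℕ) (hj : j ≤ ν) :
    aco (ν+2) (j+2) + 2 * aco (ν+1) (j+1) + aco ν j = 4 * aco (ν+1) (j+2) := by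
  obtain ⟨d, rfl⟩ : ∃ d, ν = j + d := ⟨ν - j, by omega⟩
  cases d with
  | zero =>
    have h1 : 2*(j+0+2) - (j+2) = j+2 := by omega
    have h2 : j+0+2 - (j+2) = 0 := by omega
    have h3 : 2*(j+0+1) - (j+1) = j+1 := by omega
    have h4 : j+0+1 - (j+1) = 0 := by omega
    have h5 : 2*(j+0) - j = j := by omega
    have h6 : j+0-j = 0 := by omega
    have h7 : 2*(j+0+1) - (j+2) = j := by omega
    have h8 : j+0+1 - (j+2) = 0 := by omega
    simp only [aco, h1, h2, h3, h4, h5, h6, h7, h8, Nat.choose_self,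
      Nat.choose_eq_zero_of_lt (show j < j+2 by omega)]
    push_cast; ring
  | succ e =>
    set n := j + 2*e + 2 with hn
    have h1 : 2*(j+(e+1)+2) - (j+2) = n+2 := by omega
    have h2 : j+(e+1)+2 - (j+2) = e+1 := by omega
    have h3 : 2*(j+(e+1)+1) - (j+1) = n+1 := by omega
    have h4 : j+(e+1)+1 - (j+1) = e+1 := by omega
    have h5 : 2*(j+(e+1)) - j = n := by omega
    have h6 : j+(e+1)-j = e+1 := by omega
    have h7 : 2*(j+(e+1)+1) - (j+2) = n := by omega
    have h8 : j+(e+1)+1 - (j+2) = e := by omega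
    simp only [aco, h1, h2, h3, h4, h5, h6, h7, h8]
    have hc : ((n+2).choose (j+2) : ℤ) + n.choose j
        = 2 * ((n+1).choose (j+1)) + n.choose (j+2) := by exact_mod_cast pasP n j
    linear_combination ((-1:ℤ)^j * 4^(e+1)) * hc

-- key coefficient identity, Q side
private lemma keyQ (ν j : ℕ) :
    qco (ν+2) (j+2) + 2 * qco (ν+1) (j+1) + qco ν (j+2) + 2 * qco ν (j+1) + qco ν j
      = 2 * qco (ν+1) (j+2) := by
  have h1 : 2*(ν+2)+1 = (2*ν+1)+4 := by omega
  have h2 : 2*(j+2)+1 = (2*j+1)+4 := by omega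
  have h3 : 2*(ν+1)+1 = (2*ν+1)+2 := by omega
  have h4 : 2*(j+1)+1 = (2*j+1)+2 := by omega
  simp only [qco, h1, h2, h3, h4]
  have hc : (((2*ν+1)+4).choose ((2*j+1)+4) : ℤ) + (2*ν+1).choose ((2*j+1)+4)
      + (2*ν+1).choose (2*j+1)
      = 2*(((2*ν+1)+2).choose ((2*j+1)+4)) + 2*(((2*ν+1)+2).choose ((2*j+1)+2))
        + 2*((2*ν+1).choose ((2*j+1)+2)) := by exact_mod_cast pasQ (2*ν+1) (2*j+1)
  linear_combination ((-1:ℤ)^j) * hc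

private lemma e0P (ν : ℕ) : aco (ν+2) 0 = 4 * aco (ν+1) 0 := by
  simp [aco]; ring

private lemma e1P (ν : ℕ) : aco (ν+2) 1 + 2 * aco (ν+1) 0 = 4 * aco (ν+1) 1 := by
  have h1 : 2*(ν+2)-1 = 2*ν+3 := by omega
  have h2 : 2*(ν+1)-1 = 2*ν+1 := by omega
  have h3 : ν+2-1 = ν+1 := by omega
  have h4 : ν+1-1 = ν := by omega
  simp only [aco, h1, h2, h3, h4, Nat.sub_zero, Nat.choose_one_right, Nat.choose_zero_right]
  push_cast; ring

private lemma Pp_pad (ν m : ℕ) (h : ν < m) : Pp ν = ∑ j ∈ range m, C (aco ν j) * (X+1)^j := by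
  apply Finset.sum_subset
  · intro x hx; simp only [mem_range] at *; omega
  · intro j _ hj
    rw [aco_eq_zero (by simp only [mem_range] at hj ⊢; omega), map_zero, zero_mul]

private lemma Pp_rec (ν : ℕ) :
    Pp (ν+2) = 4 * Pp (ν+1) - 2*(X+1) * Pp (ν+1) - (X+1)^2 * Pp ν := by
  have hpad : 4 * Pp (ν+1) = ∑ j ∈ range (ν+1+2), C (4 * aco (ν+1) j) * (X+1)^j := by
    rw [Pp_pad (ν+1) (ν+1+2) (by omega), Finset.mul_sum]
    exact Finset.sum_congr rfl fun j _ => by simp [C_mul]; ring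
  have h2 : 2*(X+1) * Pp (ν+1) = ∑ j ∈ range (ν+1+1), C (2 * aco (ν+1) j) * (X+1)^(j+1) := by
    rw [Pp_pad (ν+1) (ν+1+1) (by omega), Finset.mul_sum]
    exact Finset.sum_congr rfl fun j _ => by simp [C_mul]; ring
  have h3 : (X+1)^2 * Pp ν = ∑ j ∈ range (ν+1), C (aco ν j) * (X+1)^(j+2) := by
    rw [Pp_pad ν (ν+1) (by omega), Finset.mul_sum]
    exact Finset.sum_congr rfl fun j _ => by ring
  have key : (∑ j ∈ range (ν+1+2), C (aco (ν+2) j) * (X+1)^j)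
      + (∑ j ∈ range (ν+1+1), C (2 * aco (ν+1) j) * (X+1)^(j+1))
      + (∑ j ∈ range (ν+1), C (aco ν j) * (X+1)^(j+2))
      = ∑ j ∈ range (ν+1+2), C (4 * aco (ν+1) j) * (X+1)^j := by
    rw [peel2 (ν+1) (fun j => C (aco (ν+2) j) * (X+1)^j),
        peel2 (ν+1) (fun j => C (4 * aco (ν+1) j) * (X+1)^j),
        peel1 (ν+1) (fun j => C (2 * aco (ν+1) j) * (X+1)^(j+1))]
    have hs : ∑ j ∈ range (ν+1),
        (C (aco (ν+2) (j+2)) * (X+1)^(j+2) + C (2 * aco (ν+1) (j+1)) * (X+1)^(j+1+1)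
          + C (aco ν j) * (X+1)^(j+2))
        = ∑ j ∈ range (ν+1), C (4 * aco (ν+1) (j+2)) * (X+1)^(j+2) := by
      refine Finset.sum_congr rfl fun j hj => ?_
      have h := keyP ν j (by simpa using Nat.lt_succ_iff.mp (mem_range.mp hj))
      have hC : C (aco (ν+2) (j+2)) + C (2 * aco (ν+1) (j+1)) + C (aco ν j)
          = C (4 * aco (ν+1) (j+2)) := by
        rw [← map_add, ← map_add]
        exact congrArg C (by linarith [h])
      linear_combination (X+1:ℤ[X])^(j+2) * hC
    have hsplit : ∑ j ∈ range (ν+1),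
        (C (aco (ν+2) (j+2)) * (X+1)^(j+2) + C (2 * aco (ν+1) (j+1)) * (X+1)^(j+1+1)
          + C (aco ν j) * (X+1)^(j+2))
        = (∑ j ∈ range (ν+1), C (aco (ν+2) (j+2)) * (X+1)^(j+2))
          + (∑ j ∈ range (ν+1), C (2 * aco (ν+1) (j+1)) * (X+1)^(j+1+1))
          + (∑ j ∈ range (ν+1), C (aco ν j) * (X+1)^(j+2)) := by
      simp [Finset.sum_add_distrib]
    have hC1 : C (aco (ν+2) 1) + C (2 * aco (ν+1) 0) = C (4 * aco (ν+1) 1) := by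
      rw [← map_add]; exact congrArg C (e1P ν)
    have hC0 : C (aco (ν+2) 0) = C (4 * aco (ν+1) 0) := congrArg C (e0P ν)
    linear_combination hs - hsplit + (X+1:ℤ[X]) * hC1 + hC0
  have hL : Pp (ν+2) = ∑ j ∈ range (ν+1+2), C (aco (ν+2) j) * (X+1)^j :=
    Pp_pad (ν+2) (ν+1+2) (by omega)
  linear_combination hL + key - hpad + h2 + h3


private lemma e0Q (ν : ℕ) : qco (ν+2) 0 + qco ν 0 = 2 * qco (ν+1) 0 := by
  simp only [qco, show 2*0+1=1 from rfl, Nat.choose_one_right, pow_zero, one_mul]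
  push_cast; ring

private lemma e1Q (ν : ℕ) :
    qco (ν+2) 1 + 2 * qco (ν+1) 0 + qco ν 1 + 2 * qco ν 0 = 2 * qco (ν+1) 1 := by
  have h1 : 2*(ν+2)+1 = (2*ν+1)+4 := by omega
  have h2 : 2*(ν+1)+1 = (2*ν+1)+2 := by omega
  simp only [qco, h1, h2, show 2*0+1=1 from rfl, show 2*1+1=2+1 from rfl, Nat.choose_one_right]
  have hc : (((2*ν+1)+4).choose (2+1) : ℤ) + (2*ν+1).choose (2+1)
      = 2 * (((2*ν+1)+2).choose (2+1)) + 2*((2*ν+1)+2) + 2*(2*ν+1) := by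
    exact_mod_cast pasQ1 (2*ν+1)
  push_cast at hc ⊢
  linear_combination -hc

private lemma Qp_pad (ν m : ℕ) (h : ν < m) : Qp ν = ∑ l ∈ range m, C (qco ν l) * X^l := by
  apply Finset.sum_subset
  · intro x hx; simp only [mem_range] at *; omega
  · intro l _ hl
    rw [qco_eq_zero (by simp only [mem_range] at hl ⊢; omega), map_zero, zero_mul]

private lemma Qp_rec (ν : ℕ) :
    Qp (ν+2) = 2 * Qp (ν+1) - 2*X * Qp (ν+1) - Qp ν - 2*X * Qp ν - X^2 * Qp ν := by
  have hR : 2 * Qp (ν+1) = ∑ j ∈ range (ν+1+2), C (2 * qco (ν+1) j) * X^j := by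
    rw [Qp_pad (ν+1) (ν+1+2) (by omega), Finset.mul_sum]
    exact Finset.sum_congr rfl fun j _ => by simp [C_mul]; ring
  have h2 : 2*X * Qp (ν+1) = ∑ j ∈ range (ν+1+1), C (2 * qco (ν+1) j) * X^(j+1) := by
    rw [Qp_pad (ν+1) (ν+1+1) (by omega), Finset.mul_sum]
    exact Finset.sum_congr rfl fun j _ => by simp [C_mul]; ring
  have h3 : Qp ν = ∑ j ∈ range (ν+1+2), C (qco ν j) * X^j := Qp_pad ν (ν+1+2) (by omega)
  have h4 : 2*X * Qp ν = ∑ j ∈ range (ν+1+1), C (2 * qco ν j) * X^(j+1) := by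
    rw [Qp_pad ν (ν+1+1) (by omega), Finset.mul_sum]
    exact Finset.sum_congr rfl fun j _ => by simp [C_mul]; ring
  have h5 : X^2 * Qp ν = ∑ j ∈ range (ν+1), C (qco ν j) * X^(j+2) := by
    rw [Qp, Finset.mul_sum]
    exact Finset.sum_congr rfl fun j _ => by ring
  have hL : Qp (ν+2) = ∑ j ∈ range (ν+1+2), C (qco (ν+2) j) * X^j :=
    Qp_pad (ν+2) (ν+1+2) (by omega)
  have key : (∑ j ∈ range (ν+1+2), C (qco (ν+2) j) * X^j)
      + (∑ j ∈ range (ν+1+1), C (2 * qco (ν+1) j) * X^(j+1))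
      + (∑ j ∈ range (ν+1+2), C (qco ν j) * X^j)
      + (∑ j ∈ range (ν+1+1), C (2 * qco ν j) * X^(j+1))
      + (∑ j ∈ range (ν+1), C (qco ν j) * X^(j+2))
      = ∑ j ∈ range (ν+1+2), C (2 * qco (ν+1) j) * X^j := by
    rw [peel2 (ν+1) (fun j => C (qco (ν+2) j) * X^j),
        peel2 (ν+1) (fun j => C (qco ν j) * X^j),
        peel2 (ν+1) (fun j => C (2 * qco (ν+1) j) * X^j),
        peel1 (ν+1) (fun j => C (2 * qco (ν+1) j) * X^(j+1)),
        peel1 (ν+1) (fun j => C (2 * qco ν j) * X^(j+1))]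
    have hs : ∑ j ∈ range (ν+1),
        (C (qco (ν+2) (j+2)) * X^(j+2) + C (2 * qco (ν+1) (j+1)) * X^(j+1+1)
          + C (qco ν (j+2)) * X^(j+2) + C (2 * qco ν (j+1)) * X^(j+1+1)
          + C (qco ν j) * X^(j+2))
        = ∑ j ∈ range (ν+1), C (2 * qco (ν+1) (j+2)) * X^(j+2) := by
      refine Finset.sum_congr rfl fun j _ => ?_
      have hC : C (qco (ν+2) (j+2)) + C (2 * qco (ν+1) (j+1)) + C (qco ν (j+2))
          + C (2 * qco ν (j+1)) + C (qco ν j) = C (2 * qco (ν+1) (j+2)) := by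
        rw [← map_add, ← map_add, ← map_add, ← map_add]
        exact congrArg C (keyQ ν j)
      linear_combination (X:ℤ[X])^(j+2) * hC
    have hsplit : ∑ j ∈ range (ν+1),
        (C (qco (ν+2) (j+2)) * X^(j+2) + C (2 * qco (ν+1) (j+1)) * X^(j+1+1)
          + C (qco ν (j+2)) * X^(j+2) + C (2 * qco ν (j+1)) * X^(j+1+1)
          + C (qco ν j) * X^(j+2))
        = (∑ j ∈ range (ν+1), C (qco (ν+2) (j+2)) * X^(j+2))
          + (∑ j ∈ range (ν+1), C (2 * qco (ν+1) (j+1)) * X^(j+1+1))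
          + (∑ j ∈ range (ν+1), C (qco ν (j+2)) * X^(j+2))
          + (∑ j ∈ range (ν+1), C (2 * qco ν (j+1)) * X^(j+1+1))
          + (∑ j ∈ range (ν+1), C (qco ν j) * X^(j+2)) := by
      simp [Finset.sum_add_distrib]
    have hC1 : C (qco (ν+2) 1) + C (2 * qco (ν+1) 0) + C (qco ν 1) + C (2 * qco ν 0)
        = C (2 * qco (ν+1) 1) := by
      rw [← map_add, ← map_add, ← map_add]; exact congrArg C (e1Q ν)
    have hC0 : C (qco (ν+2) 0) + C (qco ν 0) = C (2 * qco (ν+1) 0) := by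
      rw [← map_add]; exact congrArg C (e0Q ν)
    linear_combination hs - hsplit + (X:ℤ[X]) * hC1 + hC0
  linear_combination hL + key - hR + h2 + h3 + h4 + h5

private lemma PQ (ν : ℕ) : Pp ν = Qp ν := by
  induction ν using Nat.twoStepInduction with
  | zero =>
    norm_num [Pp, Qp, aco, qco]
  | one =>
    norm_num [Pp, Qp, aco, qco, Finset.sum_range_succ, Nat.choose]
    ring
  | more n ih1 ih2 =>
    rw [Pp_rec, Qp_rec, ih1, ih2]; ring

/-- For all natural numbers `ν` and `l` with `l ≤ ν`,
`∑_{j=l}^{ν} (-1)^j 4^{ν-j} C(2ν-j,j) C(j,l) = (-1)^l C(2ν+1, 2l+1)` in `ℤ`. -/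
theorem binomial_heat_identity (ν l : ℕ) (h : l ≤ ν) :
    ∑ j ∈ Finset.Icc l ν,
        (-1 : ℤ) ^ j * 4 ^ (ν - j) * (Nat.choose (2 * ν - j) j : ℤ) * (Nat.choose j l : ℤ) =
      (-1 : ℤ) ^ l * (Nat.choose (2 * ν + 1) (2 * l + 1) : ℤ) := by
  have h1 : (Pp ν).coeff l = ∑ j ∈ range (ν+1), aco ν j * (j.choose l : ℤ) := by
    simp [Pp, Polynomial.finset_sum_coeff, Polynomial.coeff_C_mul,
      Polynomial.coeff_X_add_one_pow]
  have h2 : (Qp ν).coeff l = qco ν l := by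
    simp only [Qp, Polynomial.finset_sum_coeff, Polynomial.coeff_C_mul,
      Polynomial.coeff_X_pow, mul_ite, mul_one, mul_zero]
    rw [Finset.sum_ite_eq (range (ν+1)) l (fun j => qco ν j)]
    simp [Nat.lt_succ_iff.mpr h]
  have h3 : ∑ j ∈ Finset.Icc l ν,
        (-1 : ℤ) ^ j * 4 ^ (ν - j) * (Nat.choose (2 * ν - j) j : ℤ) * (Nat.choose j l : ℤ)
      = ∑ j ∈ range (ν+1), aco ν j * (j.choose l : ℤ) := by
    rw [show (∑ j ∈ Finset.Icc l ν,
        (-1 : ℤ) ^ j * 4 ^ (ν - j) * (Nat.choose (2 * ν - j) j : ℤ) * (Nat.choose j l : ℤ))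
        = ∑ j ∈ Finset.Icc l ν, aco ν j * (j.choose l : ℤ) from
      Finset.sum_congr rfl fun j _ => by rw [aco]]
    apply Finset.sum_subset
    · intro x hx; simp only [mem_range, Finset.mem_Icc] at *; omega
    · intro j _ hj
      have : j < l := by simp only [mem_range, Finset.mem_Icc] at *; omega
      simp [Nat.choose_eq_zero_of_lt this]
  rw [h3, ← h1, PQ, h2, qco]
end

section
/- For every natural number ν and all real numbers m and X, one has Σ_{r=0}^{ν} (−1)^r · (Γ(3/2+ν) Γ(1/2+ν)) / ((ν−r)! · Γ(3/2+r) · r! · Γ(1/2+ν−r)) · m^{2(ν−r)} (4X − m²)^r = C(2ν, ν) · p_{2ν+2}(m, X), where Γ is the real Gamma function. -/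
open Finset Real



def Sn (n j : ℕ) : ℕ := ∑ k ∈ range (n+1), Nat.choose n (2*k+1) * Nat.choose k j
def Tn (n j : ℕ) : ℕ := ∑ k ∈ range (n+1), Nat.choose n (2*k) * Nat.choose k j
def Rn (n j : ℕ) : ℕ := ∑ k ∈ range (n+1), Nat.choose n (2*k+1) * Nat.choose (k+1) j

lemma Sn_succ (n j : ℕ) : Sn (n+1) j = Sn n j + Tn n j := by
  unfold Sn Tn
  rw [Finset.sum_range_succ]
  have h0 : Nat.choose (n+1) (2*(n+1)+1) = 0 := Nat.choose_eq_zero_of_lt (by omega)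
  rw [h0]
  simp only [zero_mul, add_zero]
  have : ∀ k, Nat.choose (n+1) (2*k+1) * Nat.choose k j
      = Nat.choose n (2*k) * Nat.choose k j + Nat.choose n (2*k+1) * Nat.choose k j := by
    intro k
    rw [Nat.choose_succ_succ n (2*k), add_mul]
  rw [Finset.sum_congr rfl (fun k _ => this k), Finset.sum_add_distrib]
  omega

lemma Tn_succ (n j : ℕ) : Tn (n+1) j = Tn n j + Rn n j := by
  have e1 : Tn (n+1) j = Rn n j
      + (∑ k ∈ range (n+1), Nat.choose n (2*k+2) * Nat.choose (k+1) j) + Nat.choose 0 j := by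
    unfold Tn Rn
    rw [Finset.sum_range_succ']
    have h1 : ∀ k, Nat.choose (n+1) (2*(k+1)) * Nat.choose (k+1) j
        = Nat.choose n (2*k+1) * Nat.choose (k+1) j + Nat.choose n (2*k+2) * Nat.choose (k+1) j := by
      intro k
      have h : 2*(k+1) = (2*k+1)+1 := by ring
      rw [h, Nat.choose_succ_succ n (2*k+1), add_mul]
    rw [Finset.sum_congr rfl (fun k _ => h1 k), Finset.sum_add_distrib]
    simp
  have e2 : Tn n j = (∑ k ∈ range n, Nat.choose n (2*k+2) * Nat.choose (k+1) j)
      + Nat.choose 0 j := by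
    unfold Tn
    rw [Finset.sum_range_succ']
    have h1 : ∀ k, Nat.choose n (2*(k+1)) * Nat.choose (k+1) j
        = Nat.choose n (2*k+2) * Nat.choose (k+1) j := by
      intro k; ring_nf
    rw [Finset.sum_congr rfl (fun k _ => h1 k)]
    simp
  have e3 : (∑ k ∈ range (n+1), Nat.choose n (2*k+2) * Nat.choose (k+1) j)
      = (∑ k ∈ range n, Nat.choose n (2*k+2) * Nat.choose (k+1) j) := by
    rw [Finset.sum_range_succ]
    have : Nat.choose n (2*n+2) = 0 := Nat.choose_eq_zero_of_lt (by omega)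
    rw [this, zero_mul, add_zero]
  omega

lemma Rn_succ (n j : ℕ) : Rn n (j+1) = Sn n j + Sn n (j+1) := by
  unfold Rn Sn
  have : ∀ k, Nat.choose n (2*k+1) * Nat.choose (k+1) (j+1)
      = Nat.choose n (2*k+1) * Nat.choose k j + Nat.choose n (2*k+1) * Nat.choose k (j+1) := by
    intro k
    rw [Nat.choose_succ_succ k j, mul_add]
  rw [Finset.sum_congr rfl (fun k _ => this k), Finset.sum_add_distrib]

lemma Rn_zero (n : ℕ) : Rn n 0 = Sn n 0 := by
  unfold Rn Sn
  simp

lemma Sn_rec_succ (n j : ℕ) : Sn (n+2) (j+1) = 2 * Sn (n+1) (j+1) + Sn n j := by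
  have h1 : Sn (n+2) (j+1) = Sn (n+1) (j+1) + Tn (n+1) (j+1) := Sn_succ (n+1) (j+1)
  have h2 := Tn_succ n (j+1)
  have h3 := Rn_succ n j
  have h4 := Sn_succ n (j+1)
  omega

lemma Sn_rec_zero (n : ℕ) : Sn (n+2) 0 = 2 * Sn (n+1) 0 := by
  have h1 : Sn (n+2) 0 = Sn (n+1) 0 + Tn (n+1) 0 := Sn_succ (n+1) 0
  have h2 := Tn_succ n 0
  have h3 := Rn_zero n
  have h4 := Sn_succ n 0
  omega

lemma Sn_one (j : ℕ) : Sn 1 j = Nat.choose 0 j := by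
  unfold Sn
  rw [show (1:ℕ)+1 = 2 from rfl, Finset.sum_range_succ, Finset.sum_range_succ,
    Finset.sum_range_zero]
  norm_num [show Nat.choose 1 3 = 0 from rfl]

lemma Sn_two (j : ℕ) : Sn 2 j = 2 * Nat.choose 0 j := by
  unfold Sn
  rw [show (2:ℕ)+1 = 3 from rfl, Finset.sum_range_succ, Finset.sum_range_succ,
    Finset.sum_range_succ, Finset.sum_range_zero]
  norm_num [show Nat.choose 2 3 = 0 from rfl, show Nat.choose 2 5 = 0 from rfl]

lemma crux (n j : ℕ) : 4^j * Sn (n+1) j = 2^n * Nat.choose (n-j) j := by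
  have base0 : ∀ j, 4^j * Sn 1 j = 2^0 * Nat.choose (0-j) j := by
    intro j
    cases j with
    | zero => simp [Sn_one]
    | succ j => rw [Sn_one, Nat.choose_zero_succ, Nat.zero_sub, Nat.choose_zero_succ]; ring
  have base1 : ∀ j, 4^j * Sn 2 j = 2^1 * Nat.choose (1-j) j := by
    intro j
    cases j with
    | zero => simp [Sn_two]
    | succ j =>
      have h2 : (1:ℕ) - (j+1) = 0 := by omega
      simp [Sn_two, h2]
  have key : ∀ n, (∀ j, 4^j * Sn (n+1) j = 2^n * Nat.choose (n-j) j)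
      ∧ (∀ j, 4^j * Sn (n+2) j = 2^(n+1) * Nat.choose (n+1-j) j) := by
    intro n
    induction n with
    | zero => exact ⟨base0, base1⟩
    | succ n ih =>
      refine ⟨ih.2, ?_⟩
      intro j
      cases j with
      | zero =>
        show 4^0 * Sn (n+3) 0 = 2^(n+2) * Nat.choose (n+2-0) 0
        have h : Sn (n+3) 0 = 2 * Sn (n+2) 0 := Sn_rec_zero (n+1)
        have h2 : 4^0 * Sn (n+2) 0 = 2^(n+1) * Nat.choose (n+1-0) 0 := ih.2 0
        have hp : (2:ℕ)^(n+2) = 2 * 2^(n+1) := by ring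
        simp only [pow_zero, one_mul, Nat.sub_zero, Nat.choose_zero_right, mul_one] at *
        omega
      | succ j =>
        show 4^(j+1) * Sn (n+3) (j+1) = 2^(n+2) * Nat.choose (n+2-(j+1)) (j+1)
        have h1 : Sn (n+3) (j+1) = 2 * Sn (n+2) (j+1) + Sn (n+1) j := Sn_rec_succ (n+1) j
        have e0 : n+1-(j+1) = n-j := by omega
        calc 4^(j+1) * Sn (n+3) (j+1)
            = 2*(4^(j+1) * Sn (n+2) (j+1)) + 4*(4^j * Sn (n+1) j) := by rw [h1]; ring
          _ = 2*(2^(n+1) * Nat.choose (n+1-(j+1)) (j+1)) + 4*(2^n * Nat.choose (n-j) j) := by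
              rw [ih.2 (j+1), ih.1 j]
          _ = 2^(n+2) * (Nat.choose (n-j) (j+1) + Nat.choose (n-j) j) := by rw [e0]; ring
          _ = 2^(n+2) * Nat.choose (n+2-(j+1)) (j+1) := by
              rcases le_or_gt j n with h | h
              · have e : n+2-(j+1) = (n-j)+1 := by omega
                rw [e, Nat.choose_succ_succ]
                ring
              · have e1 : n - j = 0 := by omega
                have e2 : n+2-(j+1) < j+1 := by omega
                rw [e1, Nat.choose_eq_zero_of_lt e2,
                  Nat.choose_zero_succ, Nat.choose_eq_zero_of_lt (by omega : 0 < j)]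
  exact (key n).1 j

lemma Sn_def (n j : ℕ) : Sn n j = ∑ k ∈ range (n+1), Nat.choose n (2*k+1) * Nat.choose k j := rfl


lemma gamma_half (n : ℕ) :
    Real.Gamma (1/2 + n) = (Nat.factorial (2*n) : ℝ) * Real.sqrt π / (4^n * (Nat.factorial n : ℝ)) := by
  induction n with
  | zero => rw [show (1:ℝ)/2 + (0:ℕ) = 1/2 by norm_num, Real.Gamma_one_half_eq]; norm_num
  | succ n ih =>
    have h : (1:ℝ)/2 + ((n:ℝ)+1) = (1/2 + n) + 1 := by ring
    push_cast
    rw [h, Real.Gamma_add_one (by positivity), ih]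
    have h2 : (Nat.factorial (2*(n+1)) : ℝ) = (2*n+2) * (2*n+1) * (Nat.factorial (2*n) : ℝ) := by
      rw [show 2*(n+1) = (2*n+1)+1 by ring, Nat.factorial_succ, Nat.factorial_succ]
      push_cast; ring
    have h3 : (Nat.factorial (n+1) : ℝ) = (n+1) * (Nat.factorial n : ℝ) := by
      rw [Nat.factorial_succ]; push_cast; ring
    push_cast [h2, h3]
    have hf : (Nat.factorial n : ℝ) ≠ 0 := by positivity
    have h4 : (4:ℝ)^n ≠ 0 := by positivity
    field_simp
    ring

lemma gamma_3half (n : ℕ) :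
    Real.Gamma (3/2 + n) = (Nat.factorial (2*n+1) : ℝ) * Real.sqrt π / (2 * 4^n * (Nat.factorial n : ℝ)) := by
  have h : (3:ℝ)/2 + n = 1/2 + ((n+1 : ℕ) : ℝ) := by push_cast; ring
  rw [h, gamma_half (n+1)]
  have h2 : (Nat.factorial (2*(n+1)) : ℝ) = (2*n+2) * (Nat.factorial (2*n+1) : ℝ) := by
    rw [show 2*(n+1) = (2*n+1)+1 by ring, Nat.factorial_succ]
    push_cast; ring
  have h3 : (Nat.factorial (n+1) : ℝ) = (n+1) * (Nat.factorial n : ℝ) := by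
    rw [Nat.factorial_succ]; push_cast; ring
  rw [h2, h3, pow_succ]
  have hf : (Nat.factorial n : ℝ) ≠ 0 := by positivity
  have h4 : (4:ℝ)^n ≠ 0 := by positivity
  field_simp
  ring

lemma coeff_eq (ν r : ℕ) (hr : r ≤ ν) :
    (Real.Gamma (3/2 + ν) * Real.Gamma (1/2 + ν)) /
      ((Nat.factorial (ν-r) : ℝ) * Real.Gamma (3/2 + r) * (Nat.factorial r : ℝ) *
        Real.Gamma (1/2 + ((ν - r : ℕ) : ℝ)))
    = ((Nat.choose (2*ν) ν * Nat.choose (2*ν+1) (2*r+1) : ℕ) : ℝ) / 4^ν := by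
  obtain ⟨a, rfl⟩ : ∃ a, ν = r + a := ⟨ν - r, by omega⟩
  have hsub : r + a - r = a := by omega
  rw [hsub, gamma_3half (r+a), gamma_half (r+a), gamma_3half r, gamma_half a]
  have hc1 : (Nat.factorial (2*(r+a)) : ℝ)
      = (Nat.choose (2*(r+a)) (r+a) : ℝ) * (Nat.factorial (r+a)) * (Nat.factorial (r+a)) := by
    have := Nat.choose_mul_factorial_mul_factorial (show r+a ≤ 2*(r+a) by omega)
    have h2 : 2*(r+a) - (r+a) = r+a := by omega
    rw [h2] at this
    exact_mod_cast this.symm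
  have hc2 : (Nat.factorial (2*(r+a)+1) : ℝ)
      = (Nat.choose (2*(r+a)+1) (2*r+1) : ℝ) * (Nat.factorial (2*r+1)) * (Nat.factorial (2*a)) := by
    have := Nat.choose_mul_factorial_mul_factorial (show 2*r+1 ≤ 2*(r+a)+1 by omega)
    have h2 : 2*(r+a)+1 - (2*r+1) = 2*a := by omega
    rw [h2] at this
    exact_mod_cast this.symm
  have hs : Real.sqrt π ≠ 0 := by positivity
  have hfa : (Nat.factorial a : ℝ) ≠ 0 := by positivity
  have hfr : (Nat.factorial r : ℝ) ≠ 0 := by positivity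
  have hfra : (Nat.factorial (r+a) : ℝ) ≠ 0 := by positivity
  have hf2r : (Nat.factorial (2*r+1) : ℝ) ≠ 0 := by positivity
  have hf2a : (Nat.factorial (2*a) : ℝ) ≠ 0 := by positivity
  have h4r : (4:ℝ)^r ≠ 0 := by positivity
  have h4a : (4:ℝ)^a ≠ 0 := by positivity
  have h4ra : (4:ℝ)^(r+a) ≠ 0 := by positivity
  rw [hc1, hc2]
  push_cast
  rw [pow_add (4:ℝ) r a]
  field_simp


/-- For every natural number `ν` and all real `m X`,
`∑_{r=0}^{ν} (-1)^r Γ(3/2+ν)Γ(1/2+ν) / ((ν-r)! Γ(3/2+r) r! Γ(1/2+ν-r)) · m^{2(ν-r)} (4X-m²)^r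
  = C(2ν,ν) · p_{2ν+2}(m,X)`, where
`p_{2ν+2}(m,X) = ∑_{j=0}^{ν} (-1)^j C(2ν-j,j) X^j m^{2ν-2j}`. -/
theorem rankin_cohen_coefficient_identity (ν : ℕ) (m X : ℝ) :
    ∑ r ∈ Finset.range (ν + 1),
        (-1 : ℝ) ^ r * (Real.Gamma (3 / 2 + ν) * Real.Gamma (1 / 2 + ν)) /
            ((Nat.factorial (ν - r) : ℝ) * Real.Gamma (3 / 2 + r) * (Nat.factorial r : ℝ) *
              Real.Gamma (1 / 2 + ((ν - r : ℕ) : ℝ))) *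
          m ^ (2 * (ν - r)) * (4 * X - m ^ 2) ^ r =
      (Nat.choose (2 * ν) ν : ℝ) *
        ∑ j ∈ Finset.range (ν + 1),
          (-1 : ℝ) ^ j * (Nat.choose (2 * ν - j) j : ℝ) * X ^ j * m ^ (2 * ν - 2 * j) := by
  set F : ℕ → ℕ → ℝ := fun r j =>
    (-1:ℝ)^j * (Nat.choose (2*ν) ν : ℝ) / 4^ν * X^j * m^(2*ν-2*j)
      * ((Nat.choose (2*ν+1) (2*r+1) * Nat.choose r j * 4^j : ℕ) : ℝ) with hF
  have step1 : ∀ r ∈ range (ν+1),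
      (-1 : ℝ) ^ r * (Real.Gamma (3 / 2 + ν) * Real.Gamma (1 / 2 + ν)) /
            ((Nat.factorial (ν - r) : ℝ) * Real.Gamma (3 / 2 + r) * (Nat.factorial r : ℝ) *
              Real.Gamma (1 / 2 + ((ν - r : ℕ) : ℝ))) *
          m ^ (2 * (ν - r)) * (4 * X - m ^ 2) ^ r = ∑ j ∈ range (ν+1), F r j := by
    intro r hr
    rw [Finset.mem_range] at hr
    have hrν : r ≤ ν := by omega
    rw [mul_div_assoc, coeff_eq ν r hrν, sub_eq_add_neg, add_pow, Finset.mul_sum]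
    rw [Finset.sum_subset (Finset.range_subset_range.mpr (by omega : r+1 ≤ ν+1))]
    · refine Finset.sum_congr rfl ?_
      intro j hj
      rw [Finset.mem_range] at hj
      rcases le_or_gt j r with hjr | hjr
      · have h2 : m^(2*(ν-r)) * m^(2*(r-j)) = m^(2*ν-2*j) := by
          rw [← pow_add]; congr 1; omega
        have h3 : (-1:ℝ)^r * (-1:ℝ)^(r-j) = (-1:ℝ)^j := by
          rw [← pow_add, show r + (r-j) = 2*(r-j)+j by omega, pow_add, pow_mul]
          norm_num
        have hneg : (-(m^2):ℝ)^(r-j) = (-1:ℝ)^(r-j) * m^(2*(r-j)) := by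
          rw [neg_pow, ← pow_mul]
        rw [hF]
        simp only []
        rw [hneg, ← h2, ← h3]
        push_cast
        ring
      · have hz : Nat.choose r j = 0 := Nat.choose_eq_zero_of_lt hjr
        rw [hF]
        simp [hz]
    · intro j hj hj2
      rw [Finset.mem_range] at hj
      rw [Finset.mem_range, not_lt] at hj2
      have hz : Nat.choose r j = 0 := Nat.choose_eq_zero_of_lt (by omega)
      simp [hz]
  rw [Finset.sum_congr rfl step1, Finset.sum_comm, Finset.mul_sum]
  refine Finset.sum_congr rfl ?_
  intro j hj
  rw [Finset.mem_range] at hj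
  have natkey : (∑ r ∈ range (ν+1), Nat.choose (2*ν+1) (2*r+1) * Nat.choose r j * 4^j)
      = 4^ν * Nat.choose (2*ν-j) j := by
    have hext : Sn (2*ν+1) j = ∑ r ∈ range (ν+1), Nat.choose (2*ν+1) (2*r+1) * Nat.choose r j := by
      rw [Sn_def]
      rw [← Finset.sum_subset (Finset.range_subset_range.mpr (by omega : ν+1 ≤ 2*ν+1+1))]
      intro k hk hk2
      rw [Finset.mem_range, not_lt] at hk2
      have hz : Nat.choose (2*ν+1) (2*k+1) = 0 := Nat.choose_eq_zero_of_lt (by omega)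
      rw [hz, zero_mul]
    have hc := crux (2*ν) j
    rw [hext] at hc
    have h24 : (2:ℕ)^(2*ν) = 4^ν := by rw [pow_mul]; norm_num
    calc (∑ r ∈ range (ν+1), Nat.choose (2*ν+1) (2*r+1) * Nat.choose r j * 4^j)
        = 4^j * ∑ r ∈ range (ν+1), Nat.choose (2*ν+1) (2*r+1) * Nat.choose r j := by
          rw [← Finset.sum_mul, mul_comm]
      _ = 2^(2*ν) * Nat.choose (2*ν-j) j := hc
      _ = 4^ν * Nat.choose (2*ν-j) j := by rw [h24]
  rw [hF]
  simp only []
  rw [← Finset.mul_sum, ← Nat.cast_sum, natkey]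
  have h4 : (4:ℝ)^ν ≠ 0 := by positivity
  push_cast
  field_simp
end

section
/- Define, for natural numbers ν and l and rational numbers r and X, the polynomial P_{ν,l}(r,X) := Σ_{j=0}^{ν} (−1)^j C(2ν+2l−j, j) · (C(2l,l) · C(ν+l−j, l)) / (C(2ν+2l−j, l) · C(ν+l, l)) · X^j r^{2ν−2j}. Then for every ν ≥ 1, every l ≥ 0, and all rational r, X, the recursion P_{ν,l}(r,X) = −X · P_{ν−1,l}(r,X) + (r²/4) · (1 + (4ν−1)/(2l+1)) · P_{ν−1,l+1}(r,X) holds. -/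
open Nat

private lemma fact_ne (n : ℕ) : ((n ! : ℚ)) ≠ 0 := by exact_mod_cast n.factorial_ne_zero

private lemma cast_choose_q {n k m : ℕ} (h : n = k + m) :
    (n.choose k : ℚ) = n ! / (k ! * m !) := by
  subst h
  rw [Nat.cast_choose ℚ (Nat.le_add_right k m), Nat.add_sub_cancel_left]

private lemma fs {n m : ℕ} (h : n = m + 1) : ((n ! : ℚ)) = ((m : ℚ) + 1) * (m ! : ℚ) := by
  subst h; rw [Nat.factorial_succ]; push_cast; ring

set_option maxHeartbeats 4000000 in
private lemma mid_full (i k l : ℕ) (r X : ℚ) :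
    (-1:ℚ)^(i+1) * (Nat.choose (i+2*k+2*l+3) (i+1) : ℚ) *
      (((Nat.choose (2*l) l : ℚ) * (Nat.choose (k+l+1) l : ℚ)) /
        ((Nat.choose (i+2*k+2*l+3) l : ℚ) * (Nat.choose (i+k+l+2) l : ℚ))) * X^(i+1) * r^(2*k+2)
  = -X * ((-1:ℚ)^i * (Nat.choose (i+2*k+2*l+2) i : ℚ) *
      (((Nat.choose (2*l) l : ℚ) * (Nat.choose (k+l+1) l : ℚ)) /
        ((Nat.choose (i+2*k+2*l+2) l : ℚ) * (Nat.choose (i+k+l+1) l : ℚ))) * X^i * r^(2*k+2))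
  + r^2/4 * (1 + (4*((i:ℚ)+(k:ℚ)+1+1) - 1)/(2*(l:ℚ)+1)) *
    ((-1:ℚ)^(i+1) * (Nat.choose (i+2*k+2*l+3) (i+1) : ℚ) *
      (((Nat.choose (2*l+2) (l+1) : ℚ) * (Nat.choose (k+l+1) (l+1) : ℚ)) /
        ((Nat.choose (i+2*k+2*l+3) (l+1) : ℚ) * (Nat.choose (i+k+l+2) (l+1) : ℚ))) * X^(i+1) * r^(2*k)) := by
  rw [cast_choose_q (show i+2*k+2*l+3 = (i+1)+(2*k+2*l+2) by omega),
      cast_choose_q (show 2*l = l + l by omega),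
      cast_choose_q (show k+l+1 = l + (k+1) by omega),
      cast_choose_q (show i+2*k+2*l+3 = l + (i+2*k+l+3) by omega),
      cast_choose_q (show i+k+l+2 = l + (i+k+2) by omega),
      cast_choose_q (show i+2*k+2*l+2 = i + (2*k+2*l+2) by omega),
      cast_choose_q (show i+2*k+2*l+2 = l + (i+2*k+l+2) by omega),
      cast_choose_q (show i+k+l+1 = l + (i+k+1) by omega),
      cast_choose_q (show 2*l+2 = (l+1) + (l+1) by omega),
      cast_choose_q (show k+l+1 = (l+1) + k by omega),
      cast_choose_q (show i+2*k+2*l+3 = (l+1) + (i+2*k+l+2) by omega),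
      cast_choose_q (show i+k+l+2 = (l+1) + (i+k+1) by omega),
      fs (show i+2*k+2*l+3 = (i+2*k+2*l+2)+1 by omega),
      fs (show i+1 = i+1 from rfl),
      fs (show i+2*k+l+3 = (i+2*k+l+2)+1 by omega),
      fs (show i+k+l+2 = (i+k+l+1)+1 by omega),
      fs (show i+k+2 = (i+k+1)+1 by omega),
      fs (show 2*l+2 = (2*l+1)+1 by omega),
      fs (show 2*l+1 = 2*l+1 from rfl),
      fs (show l+1 = l+1 from rfl),
      fs (show k+1 = k+1 from rfl)]
  have h1 : (2*(l:ℚ)+1) ≠ 0 := by positivity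
  push_cast
  field_simp [fact_ne]
  ring

set_option maxHeartbeats 1000000 in
private lemma zero_full (k l : ℕ) (r : ℚ) :
    ((Nat.choose (2*l) l : ℚ) * (Nat.choose (k+l+1) l : ℚ)) /
        ((Nat.choose (2*k+2*l+2) l : ℚ) * (Nat.choose (k+l+1) l : ℚ)) * r^(2*k+2)
  = r^2/4 * (1 + (4*((k:ℚ)+1) - 1)/(2*(l:ℚ)+1)) *
    (((Nat.choose (2*l+2) (l+1) : ℚ) * (Nat.choose (k+l+1) (l+1) : ℚ)) /
        ((Nat.choose (2*k+2*l+2) (l+1) : ℚ) * (Nat.choose (k+l+1) (l+1) : ℚ)) * r^(2*k)) := by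
  rw [cast_choose_q (show 2*l = l + l by omega),
      cast_choose_q (show k+l+1 = l + (k+1) by omega),
      cast_choose_q (show 2*k+2*l+2 = l + (2*k+l+2) by omega),
      cast_choose_q (show 2*l+2 = (l+1) + (l+1) by omega),
      cast_choose_q (show k+l+1 = (l+1) + k by omega),
      cast_choose_q (show 2*k+2*l+2 = (l+1) + (2*k+l+1) by omega),
      fs (show 2*k+l+2 = (2*k+l+1)+1 by omega),
      fs (show 2*l+2 = (2*l+1)+1 by omega),
      fs (show 2*l+1 = 2*l+1 from rfl),
      fs (show l+1 = l+1 from rfl),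
      fs (show k+1 = k+1 from rfl)]
  have h1 : (2*(l:ℚ)+1) ≠ 0 := by positivity
  push_cast
  field_simp [fact_ne]
  ring

set_option maxHeartbeats 1000000 in
private lemma top_full (n l : ℕ) (r X : ℚ) :
    (-1:ℚ)^(n+1) * (Nat.choose (n+2*l+1) (n+1) : ℚ) *
      (((Nat.choose (2*l) l : ℚ) * (Nat.choose l l : ℚ)) /
        ((Nat.choose (n+2*l+1) l : ℚ) * (Nat.choose (n+l+1) l : ℚ))) * X^(n+1) * r^0
  = -X * ((-1:ℚ)^n * (Nat.choose (n+2*l) n : ℚ) *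
      (((Nat.choose (2*l) l : ℚ) * (Nat.choose l l : ℚ)) /
        ((Nat.choose (n+2*l) l : ℚ) * (Nat.choose (n+l) l : ℚ))) * X^n * r^0) := by
  rw [cast_choose_q (show n+2*l+1 = (n+1)+(2*l) by omega),
      cast_choose_q (show 2*l = l + l by omega),
      cast_choose_q (show l = l + 0 by omega),
      cast_choose_q (show n+2*l+1 = l + (n+l+1) by omega),
      cast_choose_q (show n+l+1 = l + (n+1) by omega),
      cast_choose_q (show n+2*l = n + (2*l) by omega),
      cast_choose_q (show n+2*l = l + (n+l) by omega),
      cast_choose_q (show n+l = l + n by omega),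
      fs (show n+2*l+1 = (n+2*l)+1 from rfl),
      fs (show n+1 = n+1 from rfl),
      fs (show n+l+1 = (n+l)+1 from rfl)]
  rw [Nat.factorial_zero]
  push_cast
  field_simp [fact_ne]
  ring

private def Gfun (m l : ℕ) (r X : ℚ) : ℕ → ℚ
  | 0 => 0
  | (i+1) => -X * ((-1 : ℚ) ^ i * (Nat.choose (2 * m + 2 * l - i) i : ℚ) *
      (((Nat.choose (2 * l) l : ℚ) * (Nat.choose (m + l - i) l : ℚ)) /
        ((Nat.choose (2 * m + 2 * l - i) l : ℚ) * (Nat.choose (m + l) l : ℚ))) *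
      X ^ i * r ^ (2 * m - 2 * i))

private def Hfun (m l : ℕ) (c r X : ℚ) : ℕ → ℚ := fun j =>
  c * ((-1 : ℚ) ^ j * (Nat.choose (2 * m + 2 * (l+1) - j) j : ℚ) *
      (((Nat.choose (2 * (l+1)) (l+1) : ℚ) * (Nat.choose (m + (l+1) - j) (l+1) : ℚ)) /
        ((Nat.choose (2 * m + 2 * (l+1) - j) (l+1) : ℚ) * (Nat.choose (m + (l+1)) (l+1) : ℚ))) *
      X ^ j * r ^ (2 * m - 2 * j))


/-- The polynomial `p_{2ν+2}(r, D, l)` of the paper, with the formal variable `X`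
standing for the differential operator `D`:
`P_{ν,l}(r,X) = ∑_{j=0}^{ν} (-1)^j C(2ν+2l-j,j) · (C(2l,l) C(ν+l-j,l)) / (C(2ν+2l-j,l) C(ν+l,l))
  · X^j r^{2ν-2j}`. -/
def Ppoly (ν l : ℕ) (r X : ℚ) : ℚ :=
  ∑ j ∈ Finset.range (ν + 1),
    (-1 : ℚ) ^ j * (Nat.choose (2 * ν + 2 * l - j) j : ℚ) *
      (((Nat.choose (2 * l) l : ℚ) * (Nat.choose (ν + l - j) l : ℚ)) /
        ((Nat.choose (2 * ν + 2 * l - j) l : ℚ) * (Nat.choose (ν + l) l : ℚ))) *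
      X ^ j * r ^ (2 * ν - 2 * j)

/-- the recursion
`P_{ν,l}(r,X) = -X P_{ν-1,l}(r,X) + (r²/4)(1 + (4ν-1)/(2l+1)) P_{ν-1,l+1}(r,X)`
for `ν ≥ 1`, `l ≥ 0`, and all rational `r X`. -/
theorem Ppoly_recursion (ν l : ℕ) (hν : 1 ≤ ν) (r X : ℚ) :
    Ppoly ν l r X =
      -X * Ppoly (ν - 1) l r X +
        r ^ 2 / 4 * (1 + (4 * (ν : ℚ) - 1) / (2 * (l : ℚ) + 1)) * Ppoly (ν - 1) (l + 1) r X := by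
  obtain ⟨m, rfl⟩ : ∃ m, ν = m + 1 := ⟨ν - 1, by omega⟩
  simp only [Nat.add_sub_cancel]
  have key : ∀ j ∈ Finset.range (m + 1 + 1),
      (-1 : ℚ) ^ j * (Nat.choose (2 * (m+1) + 2 * l - j) j : ℚ) *
        (((Nat.choose (2 * l) l : ℚ) * (Nat.choose ((m+1) + l - j) l : ℚ)) /
          ((Nat.choose (2 * (m+1) + 2 * l - j) l : ℚ) * (Nat.choose ((m+1) + l) l : ℚ))) *
        X ^ j * r ^ (2 * (m+1) - 2 * j)
      = Gfun m l r X j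
        + Hfun m l (r ^ 2 / 4 * (1 + (4 * ((m+1 : ℕ) : ℚ) - 1) / (2 * (l:ℚ) + 1))) r X j := by
    intro j hj
    by_cases h0 : j = 0
    · subst h0
      simp only [Gfun, Hfun, zero_add]
      rw [show 2*(m+1)+2*l-0 = 2*m+2*l+2 by omega,
          show (m+1)+l-0 = m+l+1 by omega,
          show (m+1)+l = m+l+1 by omega,
          show 2*(m+1)-2*0 = 2*m+2 by omega,
          show 2*m+2*(l+1)-0 = 2*m+2*l+2 by omega,
          show m+(l+1)-0 = m+l+1 by omega,
          show m+(l+1) = m+l+1 by omega,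
          show 2*m-2*0 = 2*m by omega,
          show 2*(l+1) = 2*l+2 by omega]
      simp only [pow_zero, Nat.choose_zero_right, Nat.cast_one, one_mul, mul_one]
      push_cast
      linear_combination zero_full m l r
    · by_cases hm : j = m + 1
      · subst hm
        simp only [Gfun, Hfun]
        rw [show 2*(m+1)+2*l-(m+1) = m+2*l+1 by omega,
            show (m+1)+l-(m+1) = l by omega,
            show (m+1)+l = m+l+1 by omega,
            show 2*(m+1)-2*(m+1) = 0 by omega,
            show 2*m+2*l-m = m+2*l by omega,
            show m+l-m = l by omega,
            show 2*m-2*m = 0 by omega,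
            show 2*m+2*(l+1)-(m+1) = m+2*l+1 by omega,
            show m+(l+1)-(m+1) = l by omega,
            show 2*m-2*(m+1) = 0 by omega,
            Nat.choose_succ_self]
        simp only [Nat.cast_zero, mul_zero, zero_mul, zero_div, add_zero]
        linear_combination top_full m l r X
      · obtain ⟨i, rfl⟩ : ∃ i, j = i + 1 := ⟨j - 1, by omega⟩
        obtain ⟨k, rfl⟩ : ∃ k, m = i + k + 1 :=
          ⟨m - i - 1, by have := Finset.mem_range.1 hj; omega⟩
        simp only [Gfun, Hfun]
        rw [show 2*(i+k+1+1)+2*l-(i+1) = i+2*k+2*l+3 by omega,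
            show (i+k+1+1)+l-(i+1) = k+l+1 by omega,
            show (i+k+1+1)+l = i+k+l+2 by omega,
            show 2*(i+k+1+1)-2*(i+1) = 2*k+2 by omega,
            show 2*(i+k+1)+2*l-i = i+2*k+2*l+2 by omega,
            show (i+k+1)+l-i = k+l+1 by omega,
            show (i+k+1)+l = i+k+l+1 by omega,
            show 2*(i+k+1)-2*i = 2*k+2 by omega,
            show 2*(i+k+1)+2*(l+1)-(i+1) = i+2*k+2*l+3 by omega,
            show (i+k+1)+(l+1)-(i+1) = k+l+1 by omega,
            show (i+k+1)+(l+1) = i+k+l+2 by omega,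
            show 2*(i+k+1)-2*(i+1) = 2*k by omega,
            show 2*(l+1) = 2*l+2 by omega]
        push_cast
        linear_combination mid_full i k l r X
  have hG : ∑ j ∈ Finset.range (m + 1 + 1), Gfun m l r X j = -X * Ppoly m l r X := by
    rw [Finset.sum_range_succ']
    simp only [Gfun, add_zero]
    rw [Ppoly, Finset.mul_sum]
  have hH : ∑ j ∈ Finset.range (m + 1 + 1),
      Hfun m l (r ^ 2 / 4 * (1 + (4 * ((m+1 : ℕ) : ℚ) - 1) / (2 * (l:ℚ) + 1))) r X j
      = r ^ 2 / 4 * (1 + (4 * ((m+1 : ℕ) : ℚ) - 1) / (2 * (l:ℚ) + 1)) * Ppoly m (l+1) r X := by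
    rw [Finset.sum_range_succ]
    have h0 : Hfun m l (r ^ 2 / 4 * (1 + (4 * ((m+1 : ℕ) : ℚ) - 1) / (2 * (l:ℚ) + 1))) r X (m+1)
        = 0 := by
      simp only [Hfun]
      rw [show m+(l+1)-(m+1) = l by omega, Nat.choose_succ_self]
      simp
    rw [h0, add_zero, Ppoly, Finset.mul_sum]
    simp only [Hfun]
  conv_lhs => rw [Ppoly]
  rw [Finset.sum_congr rfl key, Finset.sum_add_distrib, hG, hH]
end

section
/- Let γ = (a, b; c, d) ∈ SL₂(ℤ) with c > 0 and c ≡ 0 (mod 4), and let α, β ∈ {0,1}. Let M be the 2×2 complex matrix M = [[1, 0], [0, i^{ab}]]. Then ε_a^{−1} · (c/a) · M_{αβ} = (1/4) Σ_{δ} (c/δ) ε_δ^{−1} e(α(a−δ̄)/(4c)) e(β(d−δ)/(4c)), where δ runs over the odd residues modulo 4c with δ ≡ d (mod c), δ̄ denotes the inverse of δ modulo 4c, (c/a) and (c/δ) are Jacobi symbols (a is odd since ad − bc = 1 and c is even), ε_x := 1 if x ≡ 1 (mod 4) and i if x ≡ 3 (mod 4), and e(x) := e^{2πix}. -/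
open Complex

/-- `e(x) = e^{2πix}`. -/
noncomputable def eE (x : ℂ) : ℂ := Complex.exp (2 * Real.pi * Complex.I * x)

/-- `ε_d = 1` if `d ≡ 1 (mod 4)`, `ε_d = i` if `d ≡ 3 (mod 4)` (for odd `d : ℕ`). -/
noncomputable def epsN (d : ℕ) : ℂ := if d % 4 = 1 then 1 else Complex.I

/-- `ε_x = 1` if `x ≡ 1 (mod 4)`, `ε_x = i` if `x ≡ 3 (mod 4)` (for odd `x : ℤ`). -/
noncomputable def epsZ (x : ℤ) : ℂ := if x % 4 = 1 then 1 else Complex.I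


/-!
The `δ` in the sum are `d₁ + k c` (`k = 0, …, 3`) with `d₁ ≡ d (mod c)`. Since `4 ∣ c`, neither
`(c/δ)` nor `ε_δ` depends on `k`, and in `ZMod (4c)` the inverse of `δ` is `d₁⁻¹ - k c`. The two
exponentials therefore combine to `e(P/(4c)) · i^{(α-β)k}`, and summing over `k` kills the
off-diagonal entries. On the diagonal, `ad - bc = 1` gives `(a - d₁⁻¹) + (d - d₁) ≡ abc (mod 4c)`,
so the phase is `i^{ab}`. Finally `ε_a = ε_{d₁}` because `a d₁ ≡ 1 (mod 4)`, and
`(c/|a|) = (c/d₁)` because `a d₁ ≡ 1 (mod c)` and `(c/·)` is an even character mod `c`.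
-/

open Finset
open scoped Real NumberTheorySymbols

/- Used in `ZMod (4 * c)` with `4 ∣ c` and `C = c`, where `C * C = 0` and `C * D ^ 2 = C` for
every odd `D`. -/
section SquareZero

variable {R : Type*} [CommRing R] {C D W : R}

lemma add_mul_mul_sub_mul_eq_one (hCC : C * C = 0) (hCD : C * D ^ 2 = C) (hWD : W * D = 1)
    (k : R) : (D + k * C) * (W - k * C) = 1 := by
  linear_combination (1 + k * C * D) * hWD - k * W * hCD - k ^ 2 * hCC

lemma sub_add_sub_eq_mul_mul {A B D' T : R} (hCC : C * C = 0) (hCD : C * D ^ 2 = C)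
    (hWD : W * D = 1) (hdet : A * D' - B * C = 1) (hT : D' = D + C * T) :
    (A - W) + (D' - D) = A * B * C := by
  have hAD : A * D = 1 + C * (B - A * T) := by linear_combination hdet - A * hT
  have hA : A = W + C * W * (B - A * T) := by linear_combination W * hAD - A * hWD
  have hCA : C * A = C * W := by linear_combination C * hA + W * (B - A * T) * hCC
  have hCW : C * W ^ 2 = C := by linear_combination -W ^ 2 * hCD + C * (W * D + 1) * hWD
  linear_combination hA + hT - B * hCA - W * T * hCA - T * hCW

end SquareZero

lemma eE_intCast_div (N : ℕ) [NeZero N] (m : ℤ) :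
    eE ((m : ℂ) / (N : ℂ)) = ZMod.stdAddChar (m : ZMod N) := by
  rw [eE, ZMod.stdAddChar_coe, mul_div_assoc]

lemma eE_natCast_mul_sub_div {c : ℕ} [NeZero c] (α y : ℕ) (x : ℤ) :
    eE ((α : ℂ) * ((x : ℂ) - (y : ℂ)) / (4 * (c : ℂ))) =
      ZMod.stdAddChar ((α : ZMod (4 * c)) * ((x : ZMod (4 * c)) - (y : ZMod (4 * c)))) := by
  have h : (α : ℂ) * ((x : ℂ) - (y : ℂ)) / (4 * (c : ℂ)) =
      (((α : ℤ) * (x - (y : ℤ)) : ℤ) : ℂ) / ((4 * c : ℕ) : ℂ) := by push_cast; ring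
  rw [h, eE_intCast_div]
  push_cast
  rfl

lemma stdAddChar_intCast_mul_natCast {c : ℕ} [NeZero c] (n : ℤ) :
    ZMod.stdAddChar ((n : ZMod (4 * c)) * (c : ZMod (4 * c))) = I ^ n := by
  have hc : (c : ℂ) ≠ 0 := Nat.cast_ne_zero.mpr (NeZero.ne c)
  have h : 2 * π * I * ((n * c : ℤ) : ℂ) / ((4 * c : ℕ) : ℂ) = n * (π / 2 * I) := by
    push_cast
    field_simp
    ring
  rw [← Int.cast_natCast c, ← Int.cast_mul, ZMod.stdAddChar_coe, h, exp_int_mul,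
    exp_pi_div_two_mul_I]

lemma sum_range_four_I_zpow_sub_pow (α β : Fin 2) :
    ∑ k ∈ range 4, (I ^ (((α : ℕ) : ℤ) - (β : ℕ))) ^ k = if α = β then 4 else 0 := by
  fin_cases α <;> fin_cases β <;> simp [sum_range_succ, pow_succ]

lemma matrix_one_I_zpow_apply {c : ℕ} [NeZero c] {a b : ℤ} {X Y : ZMod (4 * c)}
    (hXY : X + Y = ((a * b : ℤ) : ZMod (4 * c)) * c) (α β : Fin 2) :
    !![1, 0; 0, I ^ (a * b)] α β =
      if α = β then ZMod.stdAddChar (((α : ℕ) : ZMod (4 * c)) * X + ((β : ℕ) : ZMod (4 * c)) * Y)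
      else 0 := by
  fin_cases α <;> fin_cases β <;> simp [hXY]
  rw [← Int.cast_mul, stdAddChar_intCast_mul_natCast]

lemma jacobiSym_natCast_eq_of_modEq {c m n : ℕ} (hc : 4 ∣ c) (hm : Odd m) (hn : Odd n)
    (h : m ≡ n [MOD c]) : J(c | m) = J(c | n) := by
  obtain ⟨K, rfl⟩ := hc
  have h4 : ((4 * K : ℕ) : ℤ) % 4 = 0 := by push_cast; omega
  rw [← jacobiSym.div_four_left h4 (Nat.odd_iff.mp hm),
    ← jacobiSym.div_four_left h4 (Nat.odd_iff.mp hn),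
    show ((4 * K : ℕ) : ℤ) / 4 = K by push_cast; omega,
    jacobiSym.mod_right' K hm, jacobiSym.mod_right' K hn, show m % (4 * K) = n % (4 * K) from h]

lemma jacobiSym_natAbs_eq_one_of_modEq_one {c : ℕ} (hc : 4 ∣ c) {x : ℤ}
    (hx : x ≡ 1 [ZMOD c]) : J(c | x.natAbs) = 1 := by
  rcases Nat.eq_zero_or_pos c with rfl | hc0
  · simp only [Int.ModEq, Nat.cast_zero, Int.emod_zero] at hx
    simp [hx]
  obtain ⟨K, rfl⟩ := hc
  have hodd : Odd x.natAbs := by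
    have h4 : x ≡ 1 [ZMOD 4] := hx.of_dvd ⟨K, by push_cast; ring⟩
    rw [Int.natAbs_odd, Int.odd_iff]
    unfold Int.ModEq at h4
    omega
  rcases le_or_gt 0 x with hx0 | hx0
  · have h : x.natAbs ≡ 1 [MOD 4 * K] := by
      rw [← Int.natCast_modEq_iff, Int.natAbs_of_nonneg hx0]
      exact_mod_cast hx
    rw [jacobiSym_natCast_eq_of_modEq ⟨K, rfl⟩ hodd odd_one h, jacobiSym.one_right]
  · have h : x.natAbs ≡ 4 * K - 1 [MOD 4 * K] := by
      rw [← Int.natCast_modEq_iff, Int.ofNat_natAbs_of_nonpos hx0.le, Nat.cast_sub (by omega)]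
      exact hx.neg.trans (Int.modEq_iff_dvd.mpr ⟨1, by push_cast; ring⟩)
    -- `J(c | ·)` is periodic mod `c`, and `J(c | c - 1) = J(c mod (c - 1) | c - 1) = J(1 | c - 1)`.
    have hodd' : Odd (4 * K - 1) := Nat.odd_iff.mpr (by omega)
    have hmod : ((4 * K : ℕ) : ℤ) % ((4 * K - 1 : ℕ) : ℤ) = 1 := by
      rw [← Int.natCast_mod, Nat.mod_eq_sub_mod (by omega), show 4 * K - (4 * K - 1) = 1 by omega,
        Nat.mod_eq_of_lt (by omega)]
      rfl
    rw [jacobiSym_natCast_eq_of_modEq ⟨K, rfl⟩ hodd hodd' h, jacobiSym.mod_left, hmod,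
      jacobiSym.one_left]

lemma jacobiSym_natAbs_eq_of_mul_modEq_one {c n : ℕ} (hc : 4 ∣ c) {x : ℤ}
    (h : x * n ≡ 1 [ZMOD c]) : J(c | x.natAbs) = J(c | n) := by
  obtain ⟨q, hq⟩ := Int.modEq_iff_dvd.mp h.symm
  have hgcd : Int.gcd c n = 1 :=
    Int.isCoprime_iff_gcd_eq_one.mp ⟨-q, x, by linear_combination hq⟩
  have hxn : x.natAbs ≠ 0 ∧ n ≠ 0 := by
    rw [Int.natAbs_ne_zero, ← Int.natCast_ne_zero, ← mul_ne_zero_iff]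
    rintro h0
    rw [h0, zero_sub] at hq
    have hc1 : (c : ℤ) = 1 := Int.eq_one_of_dvd_one (by positivity) ⟨-q, by linear_combination -hq⟩
    omega
  calc J(c | x.natAbs) = J(c | x.natAbs) * J(c | n) ^ 2 := by rw [jacobiSym.sq_one hgcd, mul_one]
    _ = J(c | (x * n).natAbs) * J(c | n) := by
      rw [Int.natAbs_mul, Int.natAbs_natCast, jacobiSym.mul_right' _ hxn.1 hxn.2]; ring
    _ = J(c | n) := by rw [jacobiSym_natAbs_eq_one_of_modEq_one hc h, one_mul]

lemma epsN_eq_epsZ (n : ℕ) : epsN n = epsZ n := by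
  simp only [epsN, epsZ]
  congr 1
  exact propext (by omega)

lemma epsN_add_mul {c : ℕ} (hc : 4 ∣ c) (n k : ℕ) : epsN (n + k * c) = epsN n := by
  have : 4 ∣ k * c := dvd_mul_of_dvd_right hc k
  simp only [epsN]
  congr 1
  exact propext (by omega)

lemma epsZ_eq_of_mul_modEq_one {x y : ℤ} (h : x * y ≡ 1 [ZMOD 4]) : epsZ x = epsZ y := by
  have hxy : (x : ZMod 4) = y := by
    have h' := (ZMod.intCast_eq_intCast_iff' _ _ 4).mpr h
    push_cast at h'
    generalize (x : ZMod 4) = u at h'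
    generalize (y : ZMod 4) = v at h'
    revert u v
    decide
  rw [ZMod.intCast_eq_intCast_iff'] at hxy
  simp only [epsZ]
  rw [show x % 4 = y % 4 from hxy]

lemma filter_odd_and_natCast_eq {c : ℕ} [NeZero c] (hc : 2 ∣ c) {x : ZMod c} (hx : Odd x.val)
    (s : Finset ℕ) :
    s.filter (fun δ : ℕ => δ % 2 = 1 ∧ (δ : ZMod c) = x) =
      s.filter (fun δ : ℕ => (δ : ZMod c) = x) := by
  refine filter_congr fun δ _ => and_iff_right_of_imp fun hδ => ?_
  rw [← ZMod.natCast_zmod_val x, ZMod.natCast_eq_natCast_iff] at hδ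
  exact Eq.trans (hδ.of_dvd hc) (Nat.odd_iff.mp hx)

lemma sum_filter_natCast_eq_sum_range {M : Type*} [AddCommMonoid M] {c : ℕ} [NeZero c]
    (x : ZMod c) (n : ℕ) (f : ℕ → M) :
    ∑ δ ∈ (range (n * c)).filter (fun δ : ℕ => (δ : ZMod c) = x), f δ =
      ∑ k ∈ range n, f (x.val + k * c) := by
  have hc : 0 < c := Nat.pos_of_neZero c
  have himage : (range (n * c)).filter (fun δ : ℕ => (δ : ZMod c) = x) =
      (range n).image (fun k => x.val + k * c) := by
    ext δ
    simp only [mem_filter, mem_range, mem_image]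
    constructor
    · rintro ⟨hδ, rfl⟩
      refine ⟨δ / c, Nat.div_lt_of_lt_mul (mul_comm n c ▸ hδ), ?_⟩
      rw [ZMod.val_natCast]
      exact Nat.mod_add_div' δ c
    · rintro ⟨k, hk, rfl⟩
      refine ⟨?_, by simp⟩
      have := x.val_lt
      nlinarith
  rw [himage, sum_image]
  intro k _ l _ hkl
  exact Nat.eq_of_mul_eq_mul_right hc (Nat.add_left_cancel hkl)

lemma mul_modEq_one_of_dvd_sub {c n : ℕ} {a b d : ℤ} (hdet : a * d - b * c = 1)
    (hdn : (c : ℤ) ∣ d - n) : a * n ≡ 1 [ZMOD c] := by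
  obtain ⟨t, ht⟩ := hdn
  exact Int.modEq_iff_dvd.mpr ⟨a * t - b, by linear_combination a * ht - hdet⟩

lemma coprime_four_mul_of_mul_modEq_one {c n : ℕ} {x : ℤ} (hc : 2 ∣ c)
    (h : x * n ≡ 1 [ZMOD c]) : Nat.Coprime n (4 * c) := by
  obtain ⟨q, hq⟩ := Int.modEq_iff_dvd.mp h.symm
  have hnc : Nat.Coprime n c := Nat.isCoprime_iff_coprime.mp ⟨x, -q, by linear_combination hq⟩
  exact (Nat.Coprime.pow_right 2 (hnc.coprime_dvd_right hc)).mul_right hnc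

lemma natCast_mul_self_eq_zero {c : ℕ} (hc : 4 ∣ c) : (c : ZMod (4 * c)) * c = 0 := by
  obtain ⟨K, rfl⟩ := hc
  have h := ZMod.natCast_self (4 * (4 * K))
  push_cast at h ⊢
  linear_combination (K : ZMod (4 * (4 * K))) * h

lemma natCast_mul_sq_of_odd (c : ℕ) {n : ℕ} (hn : Odd n) :
    (c : ZMod (4 * c)) * (n : ZMod (4 * c)) ^ 2 = c := by
  obtain ⟨m, rfl⟩ := hn
  have h := ZMod.natCast_self (4 * c)
  push_cast at h ⊢
  linear_combination ((m : ZMod (4 * c)) * (m + 1)) * h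

section ModFourC

variable {c n : ℕ}

lemma odd_of_coprime_four_mul (hn : Nat.Coprime n (4 * c)) : Odd n :=
  Nat.coprime_two_right.mp (hn.coprime_dvd_right (dvd_mul_of_dvd_left (by norm_num) c))

lemma inv_mul_natCast_eq_one (hn : Nat.Coprime n (4 * c)) : (n : ZMod (4 * c))⁻¹ * n = 1 :=
  (mul_comm _ _).trans (ZMod.coe_mul_inv_eq_one _ hn)

lemma inv_natCast_add_mul (hc : 4 ∣ c) (hn : Nat.Coprime n (4 * c)) (k : ℕ) :
    ((n + k * c : ℕ) : ZMod (4 * c))⁻¹ = (n : ZMod (4 * c))⁻¹ - k * c := by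
  refine ZMod.inv_eq_of_mul_eq_one _ _ _ ?_
  push_cast
  exact add_mul_mul_sub_mul_eq_one (natCast_mul_self_eq_zero hc)
    (natCast_mul_sq_of_odd c (odd_of_coprime_four_mul hn)) (inv_mul_natCast_eq_one hn) _

lemma intCast_sub_inv_add_sub_eq (hc : 4 ∣ c) (hn : Nat.Coprime n (4 * c)) {a b d : ℤ}
    (hdet : a * d - b * c = 1) (hdn : (c : ℤ) ∣ d - n) :
    ((a : ZMod (4 * c)) - (n : ZMod (4 * c))⁻¹) + ((d : ZMod (4 * c)) - n) =
      ((a * b : ℤ) : ZMod (4 * c)) * c := by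
  obtain ⟨t, ht⟩ := hdn
  push_cast
  refine sub_add_sub_eq_mul_mul (natCast_mul_self_eq_zero hc)
    (natCast_mul_sq_of_odd c (odd_of_coprime_four_mul hn)) (inv_mul_natCast_eq_one hn)
    (T := (t : ZMod (4 * c))) ?_ ?_
  · exact_mod_cast congrArg (Int.cast : ℤ → ZMod (4 * c)) hdet
  · exact_mod_cast congrArg (Int.cast : ℤ → ZMod (4 * c)) (eq_add_of_sub_eq' ht)

lemma summand_natCast_add_mul_eq [NeZero c] (hc : 4 ∣ c) (hn : Nat.Coprime n (4 * c)) (a d : ℤ)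
    (α β : Fin 2) (k : ℕ) :
    (jacobiSym (c : ℤ) (n + k * c) : ℂ) * (epsN (n + k * c))⁻¹ *
        eE (((α : ℕ) : ℂ) * ((a : ℂ) -
          (((((n + k * c : ℕ) : ZMod (4 * c))⁻¹ : ZMod (4 * c)).val : ℕ) : ℂ)) / (4 * (c : ℂ))) *
        eE (((β : ℕ) : ℂ) * ((d : ℂ) - ((n + k * c : ℕ) : ℂ)) / (4 * (c : ℂ))) =
      (jacobiSym (c : ℤ) n : ℂ) * (epsN n)⁻¹ *
        (ZMod.stdAddChar (((α : ℕ) : ZMod (4 * c)) * ((a : ZMod (4 * c)) - (n : ZMod (4 * c))⁻¹) +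
            ((β : ℕ) : ZMod (4 * c)) * ((d : ZMod (4 * c)) - (n : ZMod (4 * c)))) *
          (I ^ (((α : ℕ) : ℤ) - (β : ℕ))) ^ k) := by
  have hn2 := odd_of_coprime_four_mul hn
  have hnk : Odd (n + k * c) :=
    hn2.add_even ((even_iff_two_dvd.mpr (dvd_trans ⟨2, rfl⟩ hc)).mul_left k)
  rw [jacobiSym_natCast_eq_of_modEq hc hnk hn2 (Nat.add_mul_mod_self_right _ _ _),
    epsN_add_mul hc, eE_natCast_mul_sub_div, eE_natCast_mul_sub_div, ZMod.natCast_zmod_val,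
    inv_natCast_add_mul hc hn, mul_assoc _ (ZMod.stdAddChar _), ← AddChar.map_add_eq_mul,
    ← zpow_natCast, ← zpow_mul, ← stdAddChar_intCast_mul_natCast (c := c),
    ← AddChar.map_add_eq_mul]
  congr 1
  exact congrArg _ (by push_cast; ring)

end ModFourC

/-- for `γ = (a,b;c,d) ∈ SL₂(ℤ)` with `c > 0`, `c ≡ 0 (mod 4)`,
`α β ∈ {0,1}`, and `M = [[1, 0],[0, i^{ab}]]`, one has
`ε_a⁻¹ (c/a) M_{αβ}
  = (1/4) ∑_{δ (mod 4c), δ odd, δ ≡ d (mod c)} (c/δ) ε_δ⁻¹ e(α(a-δ̄)/(4c)) e(β(d-δ)/(4c))`,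
where `δ̄` is the inverse of `δ` modulo `4c`. -/
theorem weil_rep_entry_c_zero_mod_four (a b d : ℤ) (c : ℕ) (hc : 0 < c) (hc4 : c % 4 = 0)
    (hdet : a * d - b * (c : ℤ) = 1) (α β : Fin 2) :
    (epsZ a)⁻¹ * (jacobiSym (c : ℤ) a.natAbs : ℂ) *
        (!![1, 0; 0, Complex.I ^ (a * b)] α β) =
      1 / 4 *
        ∑ δ ∈ (Finset.range (4 * c)).filter
            (fun δ : ℕ => δ % 2 = 1 ∧ ((δ : ZMod c) = ((d : ℤ) : ZMod c))),
          (jacobiSym (c : ℤ) δ : ℂ) * (epsN δ)⁻¹ *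
            eE (((α : ℕ) : ℂ) * ((a : ℂ) - ((((δ : ZMod (4 * c))⁻¹ : ZMod (4 * c)).val : ℕ) : ℂ)) /
              (4 * (c : ℂ))) *
            eE (((β : ℕ) : ℂ) * ((d : ℂ) - (δ : ℂ)) / (4 * (c : ℂ))) := by
  have : NeZero c := ⟨hc.ne'⟩
  have hc4' : 4 ∣ c := Nat.dvd_of_mod_eq_zero hc4
  set d₁ := (d : ZMod c).val
  have hdd₁ : (c : ℤ) ∣ d - d₁ := (ZMod.intCast_eq_intCast_iff_dvd_sub _ _ _).mp (by simp [d₁])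
  have had₁ : a * d₁ ≡ 1 [ZMOD c] := mul_modEq_one_of_dvd_sub hdet hdd₁
  have hcop : Nat.Coprime d₁ (4 * c) :=
    coprime_four_mul_of_mul_modEq_one (dvd_trans ⟨2, rfl⟩ hc4') had₁
  rw [filter_odd_and_natCast_eq (dvd_trans ⟨2, rfl⟩ hc4') (odd_of_coprime_four_mul hcop),
    sum_filter_natCast_eq_sum_range,
    sum_congr rfl fun k _ => summand_natCast_add_mul_eq hc4' hcop a d α β k,
    ← mul_sum, ← mul_sum, sum_range_four_I_zpow_sub_pow,
    epsZ_eq_of_mul_modEq_one (had₁.of_dvd (Int.natCast_dvd_natCast.mpr hc4')), ← epsN_eq_epsZ,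
    jacobiSym_natAbs_eq_of_mul_modEq_one hc4' had₁,
    matrix_one_I_zpow_apply (intCast_sub_inv_add_sub_eq hc4' hcop hdet hdd₁)]
  split_ifs <;> ring
end

section
/- Let ν ≥ 0 be an integer and let a : ℕ → ℂ be any sequence. In the formal power series ring ℂ[[q]] set f := Σ_{d≥0} a(d) q^d and θ := Σ_{j≥0} r₁(j) q^j, where r₁(j) := #{m ∈ ℤ : m² = j}. Define D := q·d/dq on ℂ[[q]], the Rankin–Cohen bracket of weights (3/2, 1/2) by [f, θ]_ν := Σ_{r+s=ν, r,s≥0} (−1)^r · (Γ(3/2+ν) Γ(1/2+ν)) / (s! Γ(3/2+r) r! Γ(1/2+s)) · (D^r f)(D^s θ), and the operator U₄ by (Σ_n b_n q^n)|U₄ := Σ_n b_{4n} q^n. Then for every n ≥ 0, the coefficient of q^n in [f, θ]_ν |U₄ equals C(2ν, ν) · Σ_{r ∈ ℤ, r² ≤ 4n} p_{2ν+2}(r, n) · a(4n − r²). -/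
/-!
Legendre's duplication formula turns the Gamma quotients of the bracket into
`(-1)^r C(2ν,ν) C(2ν+1,2r+1) / 4^ν`, and `θ` turns the coefficient of `q^{4n}` into a sum over
`x² ≤ 4n` of `a(4n - x²) C(2ν,ν) 4^{-ν} ∑_r C(2ν+1,2r+1) (x² - 4n)^r x^{2ν-2r}`.
If `u² = x² - 4n`, this inner sum is `((x+u)^{2ν+1} - (x-u)^{2ν+1}) / 2u = ∑_i α^i β^{2ν-i}` with
`α = x + u`, `β = x - u`. As a function of `α + β = 2x` and `αβ = 4n` it obeys the Lucas recurrence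
`S_{m+2} = (α+β) S_{m+1} - αβ S_m`, whose binomial solution at `m = 2ν` is `4^ν p_{2ν+2}(x, n)`.
-/

/-- The operator `D = q d/dq` on formal power series: `(Df)_n = n f_n`. -/
noncomputable def Dq (f : PowerSeries ℂ) : PowerSeries ℂ :=
  PowerSeries.mk fun n => (n : ℂ) * PowerSeries.coeff n f

/-- `r₁(j) = #{m ∈ ℤ : m² = j}`. -/
noncomputable def rOne (j : ℕ) : ℕ := Set.ncard {m : ℤ | m ^ 2 = (j : ℤ)}

open Finset

lemma sum_range_two_mul {M : Type*} [AddCommMonoid M] (f : ℕ → M) (N : ℕ) :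
    ∑ k ∈ range (2 * N), f k = ∑ r ∈ range N, (f (2 * r) + f (2 * r + 1)) := by
  induction N with
  | zero => simp
  | succ N ih => rw [show 2 * (N + 1) = 2 * N + 1 + 1 by ring, sum_range_succ, sum_range_succ, ih,
      sum_range_succ, add_assoc]

section Lucas
variable {R : Type*} [CommRing R]

/-- The Lucas sequence `U_{m+1}(p, q)` in closed form. -/
noncomputable def lucasSum (m : ℕ) (p q : R) : R :=
  ∑ j ∈ range (m + 1), ((m - j).choose j : R) * p ^ (m - 2 * j) * (-q) ^ j

lemma map_lucasSum {S : Type*} [CommRing S] (f : R →+* S) (m : ℕ) (p q : R) :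
    f (lucasSum m p q) = lucasSum m (f p) (f q) := by
  simp [lucasSum]

lemma choose_mul_pow_succ_succ (m j : ℕ) (p : R) :
    ((m + 1 - j).choose (j + 1) : R) * p ^ (m - 2 * j) =
      p * ((m - j).choose (j + 1) * p ^ (m + 1 - 2 * (j + 1))) +
        (m - j).choose j * p ^ (m - 2 * j) := by
  rcases le_or_gt (2 * j + 1) m with h | h
  · rw [show m + 1 - j = m - j + 1 by omega, Nat.choose_succ_succ',
      show m - 2 * j = m + 1 - 2 * (j + 1) + 1 by omega, pow_succ]
    push_cast
    ring
  · have h0 : (m - j).choose (j + 1) = 0 := Nat.choose_eq_zero_of_lt (by omega)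
    rcases le_or_gt j m with hj | hj
    · rw [show m + 1 - j = m - j + 1 by omega, Nat.choose_succ_succ', h0]
      simp
    · simp [show m + 1 - j = 0 by omega, show m - j = 0 by omega, Nat.choose_eq_zero_of_lt,
        show 0 < j by omega]

lemma lucasSum_add_two (m : ℕ) (p q : R) :
    lucasSum (m + 2) p q = p * lucasSum (m + 1) p q - q * lucasSum m p q := by
  have hterm : ∀ j,
      ((m + 2 - (j + 1)).choose (j + 1) : R) * p ^ (m + 2 - 2 * (j + 1)) * (-q) ^ (j + 1) =
        p * (((m + 1 - (j + 1)).choose (j + 1) : R) * p ^ (m + 1 - 2 * (j + 1)) * (-q) ^ (j + 1)) -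
          q * (((m - j).choose j : R) * p ^ (m - 2 * j) * (-q) ^ j) := by
    intro j
    rw [show m + 2 - (j + 1) = m + 1 - j by omega, show m + 1 - (j + 1) = m - j by omega,
      show m + 2 - 2 * (j + 1) = m - 2 * j by omega, choose_mul_pow_succ_succ]
    ring
  conv_lhs => rw [lucasSum, sum_range_succ', sum_range_succ]
  conv_rhs => rw [lucasSum, lucasSum, sum_range_succ' _ (m + 1)]
  rw [show m + 2 - (m + 1 + 1) = 0 by omega, Nat.choose_zero_succ]
  simp only [hterm, sum_sub_distrib, ← mul_sum, Nat.cast_zero, zero_mul, add_zero, mul_zero,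
    Nat.sub_zero, Nat.choose_zero_right, Nat.cast_one, pow_zero]
  ring

lemma geom_sum₂_eq_lucasSum (α β : R) :
    ∀ m, ∑ i ∈ range (m + 1), α ^ i * β ^ (m - i) = lucasSum m (α + β) (α * β)
  | 0 => by simp [lucasSum]
  | 1 => by simp [lucasSum, sum_range_succ, add_comm]
  | m + 2 => by
    have h₁ : ∑ i ∈ range (m + 2), α ^ i * β ^ (m + 1 - i) =
        α ^ (m + 1) + β * ∑ i ∈ range (m + 1), α ^ i * β ^ (m - i) := geom_sum₂_succ_eq α β
    have h₂ : ∑ i ∈ range (m + 3), α ^ i * β ^ (m + 2 - i) =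
        α ^ (m + 2) + β * ∑ i ∈ range (m + 2), α ^ i * β ^ (m + 1 - i) := geom_sum₂_succ_eq α β
    rw [lucasSum_add_two, ← geom_sum₂_eq_lucasSum α β m, ← geom_sum₂_eq_lucasSum α β (m + 1),
      h₂]
    linear_combination (-α) * h₁

lemma add_pow_odd_sub_sub_pow_odd (x u : R) (ν : ℕ) :
    (x + u) ^ (2 * ν + 1) - (x - u) ^ (2 * ν + 1) =
      2 * u * ∑ r ∈ range (ν + 1),
        ((2 * ν + 1).choose (2 * r + 1) : R) * (u ^ 2) ^ r * x ^ (2 * ν - 2 * r) := by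
  have hplus := add_pow u x (2 * ν + 1)
  have hminus := add_pow (-u) x (2 * ν + 1)
  rw [add_comm u x] at hplus
  rw [neg_add_eq_sub] at hminus
  rw [hplus, hminus, ← sum_sub_distrib, show 2 * ν + 1 + 1 = 2 * (ν + 1) by ring,
    sum_range_two_mul, mul_sum]
  refine sum_congr rfl fun r _ => ?_
  rw [show 2 * ν + 1 - (2 * r + 1) = 2 * ν - 2 * r by omega, Even.neg_pow ⟨r, by ring⟩,
    Odd.neg_pow ⟨r, rfl⟩, pow_succ, pow_mul]
  ring

lemma sum_choose_odd_mul_pow_eq_lucasSum_of_ne_zero [IsDomain R] [NeZero (2 : R)] (ν : ℕ)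
    (x : R) {u : R} (hu : u ≠ 0) :
    ∑ r ∈ range (ν + 1), ((2 * ν + 1).choose (2 * r + 1) : R) * (u ^ 2) ^ r * x ^ (2 * ν - 2 * r) =
      lucasSum (2 * ν) (2 * x) (x ^ 2 - u ^ 2) := by
  have hgeom : (∑ i ∈ range (2 * ν + 1), (x + u) ^ i * (x - u) ^ (2 * ν - i)) * (2 * u) =
      (x + u) ^ (2 * ν + 1) - (x - u) ^ (2 * ν + 1) := by
    rw [← geom_sum₂_mul, show x + u - (x - u) = 2 * u by ring]
    rfl
  rw [geom_sum₂_eq_lucasSum, show x + u + (x - u) = 2 * x by ring,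
    show (x + u) * (x - u) = x ^ 2 - u ^ 2 by ring, add_pow_odd_sub_sub_pow_odd] at hgeom
  exact mul_left_cancel₀ (mul_ne_zero two_ne_zero hu) (hgeom.symm.trans (mul_comm _ _))

lemma lucasSum_two_mul (ν : ℕ) (p q : R) :
    lucasSum (2 * ν) p q =
      ∑ j ∈ range (ν + 1), ((2 * ν - j).choose j : R) * p ^ (2 * ν - 2 * j) * (-q) ^ j := by
  refine (sum_subset (range_subset_range.mpr (by omega)) fun j hj hj' => ?_).symm
  simp only [mem_range, not_lt] at hj hj'
  simp [Nat.choose_eq_zero_of_lt (show 2 * ν - j < j by omega)]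

end Lucas

lemma sum_choose_odd_mul_pow_eq_lucasSum {K : Type*} [Field K] [IsAlgClosed K] [NeZero (2 : K)]
    (ν : ℕ) (x w : K) :
    ∑ r ∈ range (ν + 1), ((2 * ν + 1).choose (2 * r + 1) : K) * w ^ r * x ^ (2 * ν - 2 * r) =
      lucasSum (2 * ν) (2 * x) (x ^ 2 - w) := by
  -- The identity is polynomial in `u`: prove it over `K[X]` at `u = X`, which is not a zero
  -- divisor, and evaluate at a square root of `w`.
  obtain ⟨u, rfl⟩ := IsAlgClosed.exists_pow_nat_eq w two_pos
  have : NeZero (2 : Polynomial K) :=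
    ⟨by simpa [← map_ofNat Polynomial.C] using Polynomial.C_ne_zero.mpr (two_ne_zero (α := K))⟩
  have h := congrArg (Polynomial.evalRingHom u)
    (sum_choose_odd_mul_pow_eq_lucasSum_of_ne_zero ν (Polynomial.C x) Polynomial.X_ne_zero)
  rw [map_lucasSum] at h
  simpa using h

lemma sum_rankinCohen_coeff_mul_pow (ν : ℕ) (n x : ℂ) :
    ∑ r ∈ range (ν + 1), (-1) ^ r * (((2 * ν).choose ν : ℂ) * (2 * ν + 1).choose (2 * r + 1)) /
        4 ^ ν * (4 * n - x ^ 2) ^ r * (x ^ 2) ^ (ν - r) =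
      (2 * ν).choose ν * ∑ j ∈ range (ν + 1),
        (-1) ^ j * ((2 * ν - j).choose j : ℂ) * n ^ j * x ^ (2 * ν - 2 * j) := by
  have key := sum_choose_odd_mul_pow_eq_lucasSum ν x (x ^ 2 - 4 * n)
  rw [sub_sub_cancel, lucasSum_two_mul] at key
  calc _ = ((2 * ν).choose ν : ℂ) / 4 ^ ν * ∑ r ∈ range (ν + 1),
          ((2 * ν + 1).choose (2 * r + 1) : ℂ) * (x ^ 2 - 4 * n) ^ r * x ^ (2 * ν - 2 * r) := by
        rw [mul_sum]
        refine sum_congr rfl fun r _ => ?_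
        rw [← pow_mul, Nat.mul_sub, show x ^ 2 - 4 * n = -1 * (4 * n - x ^ 2) by ring, mul_pow]
        ring
    _ = _ := by
        rw [key, mul_sum, mul_sum]
        refine sum_congr rfl fun j hj => ?_
        have hjν : j ≤ ν := Nat.lt_succ_iff.mp (mem_range.mp hj)
        have h4 : (4 : ℂ) ^ ν = 4 ^ (ν - j) * 4 ^ j := by rw [← pow_add, Nat.sub_add_cancel hjν]
        rw [show 2 * ν - 2 * j = 2 * (ν - j) by omega, pow_mul, pow_mul, neg_pow, mul_pow, h4]
        field_simp
        ring

section Gamma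
open Real
open scoped Nat

lemma Gamma_nat_add_half_eq (k : ℕ) :
    Gamma (k + 1 / 2) = (2 * k)! * √π / (k ! * 4 ^ k) := by
  have h := Gamma_mul_Gamma_add_half (k + 1 / 2)
  rw [show (k : ℝ) + 1 / 2 + 1 / 2 = k + 1 by ring,
    show 2 * ((k : ℝ) + 1 / 2) = (2 * k : ℕ) + 1 by push_cast; ring,
    show (1 : ℝ) - (((2 * k : ℕ) : ℝ) + 1) = -((2 * k : ℕ) : ℝ) by ring, rpow_neg zero_le_two,
    rpow_natCast, Gamma_nat_eq_factorial, Gamma_nat_eq_factorial] at h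
  rw [show (4 : ℝ) ^ k = 2 ^ (2 * k) by rw [pow_mul]; norm_num, eq_div_iff (by positivity),
    ← mul_assoc, h]
  field_simp

lemma Gamma_nat_add_three_halves_eq (k : ℕ) :
    Gamma (k + 3 / 2) = (2 * k + 1)! * √π / (2 * k ! * 4 ^ k) := by
  have h := Gamma_mul_Gamma_add_half (k + 1)
  rw [show (k : ℝ) + 1 + 1 / 2 = k + 3 / 2 by ring,
    show 2 * ((k : ℝ) + 1) = (2 * k + 1 : ℕ) + 1 by push_cast; ring,
    show (1 : ℝ) - (((2 * k + 1 : ℕ) : ℝ) + 1) = -((2 * k + 1 : ℕ) : ℝ) by ring,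
    rpow_neg zero_le_two, rpow_natCast, Gamma_nat_eq_factorial, Gamma_nat_eq_factorial] at h
  rw [show 2 * (k ! : ℝ) * 4 ^ k = k ! * 2 ^ (2 * k + 1) by rw [pow_succ, pow_mul]; ring,
    eq_div_iff (by positivity), ← mul_assoc, mul_comm _ (k ! : ℝ), h]
  field_simp

lemma rankinCohen_coeff_eq (ν r : ℕ) (hr : r ≤ ν) :
    (-1 : ℝ) ^ r * (Gamma (3 / 2 + ν) * Gamma (1 / 2 + ν)) /
        ((ν - r)! * Gamma (3 / 2 + r) * r ! * Gamma (1 / 2 + ((ν - r : ℕ) : ℝ))) =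
      (-1) ^ r * ((2 * ν).choose ν * (2 * ν + 1).choose (2 * r + 1)) / 4 ^ ν := by
  obtain ⟨k, rfl⟩ := Nat.exists_eq_add_of_le hr
  have hc₁ : ((2 * (r + k)).choose (r + k) : ℝ) = (2 * (r + k))! / ((r + k)! * (r + k)!) := by
    rw [Nat.cast_choose ℝ (by omega), show 2 * (r + k) - (r + k) = r + k by omega]
  have hc₂ : ((2 * (r + k) + 1).choose (2 * r + 1) : ℝ) =
      (2 * (r + k) + 1)! / ((2 * r + 1)! * (2 * k)!) := by
    rw [Nat.cast_choose ℝ (by omega), show 2 * (r + k) + 1 - (2 * r + 1) = 2 * k by omega]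
  rw [Nat.add_sub_cancel_left, add_comm (3 / 2 : ℝ), add_comm (1 / 2 : ℝ), add_comm (3 / 2 : ℝ),
    add_comm (1 / 2 : ℝ), Gamma_nat_add_three_halves_eq, Gamma_nat_add_half_eq,
    Gamma_nat_add_three_halves_eq, Gamma_nat_add_half_eq, hc₁, hc₂, pow_add]
  field_simp

end Gamma

lemma coeff_iterate_Dq (r k : ℕ) (f : PowerSeries ℂ) :
    PowerSeries.coeff k (Dq^[r] f) = (k : ℂ) ^ r * PowerSeries.coeff k f := by
  induction r with
  | zero => simp
  | succ r ih =>
    rw [Function.iterate_succ_apply', Dq, PowerSeries.coeff_mk, ih]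
    ring

lemma coeff_sum_C_mul_iterate_Dq_mul (ν N : ℕ) (c : ℕ → ℂ) (F G : PowerSeries ℂ) :
    PowerSeries.coeff N (∑ r ∈ range (ν + 1), PowerSeries.C (c r) * Dq^[r] F * Dq^[ν - r] G) =
      ∑ p ∈ antidiagonal N, PowerSeries.coeff p.2 G *
        (PowerSeries.coeff p.1 F *
          ∑ r ∈ range (ν + 1), c r * (p.1 : ℂ) ^ r * (p.2 : ℂ) ^ (ν - r)) := by
  simp_rw [map_sum, mul_assoc, PowerSeries.coeff_C_mul, PowerSeries.coeff_mul, coeff_iterate_Dq,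
    mul_sum]
  rw [sum_comm]
  refine sum_congr rfl fun p _ => sum_congr rfl fun r _ => ?_
  ring

lemma rOne_eq_card_filter {N t : ℕ} (ht : t ≤ N) :
    rOne t = #{x ∈ (Icc (-(N : ℤ)) N).filter (fun x : ℤ => x ^ 2 ≤ N) | x.natAbs ^ 2 = t} := by
  rw [rOne, ← Set.ncard_coe_finset]
  congr 1
  ext m
  have hsq : m.natAbs ^ 2 = t ↔ m ^ 2 = t := by rw [← Int.natAbs_sq]; norm_cast
  simp only [Set.mem_ofPred_eq, mem_coe, mem_filter, mem_Icc, hsq]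
  constructor
  · intro h
    have hle : m ^ 2 ≤ N := h ▸ (by exact_mod_cast ht)
    exact ⟨⟨⟨by nlinarith, by nlinarith⟩, hle⟩, h⟩
  · exact fun h => h.2

lemma sum_range_rOne_mul {R : Type*} [NonAssocSemiring R] (N : ℕ) (g : ℕ → R) :
    ∑ t ∈ range (N + 1), (rOne t : R) * g t =
      ∑ x ∈ (Icc (-(N : ℤ)) N).filter (fun x : ℤ => x ^ 2 ≤ N), g (x.natAbs ^ 2) := by
  have hmaps : ∀ x ∈ (Icc (-(N : ℤ)) N).filter (fun x : ℤ => x ^ 2 ≤ N),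
      x.natAbs ^ 2 ∈ range (N + 1) := by
    intro x hx
    have : ((x.natAbs ^ 2 : ℕ) : ℤ) ≤ N := by
      rw [Nat.cast_pow, Int.natAbs_sq]
      exact (mem_filter.mp hx).2
    rw [mem_range]
    omega
  rw [← sum_fiberwise_of_maps_to hmaps]
  refine sum_congr rfl fun t ht => ?_
  rw [rOne_eq_card_filter (Nat.lt_succ_iff.mp (mem_range.mp ht)), ← nsmul_eq_mul, ← sum_const]
  exact sum_congr rfl fun x hx => by rw [(mem_filter.mp hx).2]

/-- for `ν ≥ 0`, any sequence `a : ℕ → ℂ`, `f = ∑ a(d) q^d`,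
`θ = ∑ r₁(j) q^j`, the Rankin--Cohen bracket
`[f,θ]_ν = ∑_{r+s=ν} (-1)^r Γ(3/2+ν)Γ(1/2+ν)/(s! Γ(3/2+r) r! Γ(1/2+s)) (D^r f)(D^s θ)`
satisfies: the coefficient of `q^n` in `[f,θ]_ν | U₄` (i.e. the coefficient of `q^{4n}`
in `[f,θ]_ν`) equals `C(2ν,ν) ∑_{r ∈ ℤ, r² ≤ 4n} p_{2ν+2}(r,n) a(4n - r²)`, where
`p_{2ν+2}(r,n) = ∑_{j=0}^{ν} (-1)^j C(2ν-j,j) n^j r^{2ν-2j}`. -/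
theorem rankin_cohen_bracket_U4_coeff (ν : ℕ) (a : ℕ → ℂ) (n : ℕ) :
    PowerSeries.coeff (4 * n)
        (∑ r ∈ Finset.range (ν + 1),
          PowerSeries.C (R := ℂ)
              ((((-1 : ℝ) ^ r * (Real.Gamma (3 / 2 + ν) * Real.Gamma (1 / 2 + ν)) /
                ((Nat.factorial (ν - r) : ℝ) * Real.Gamma (3 / 2 + r) *
                  (Nat.factorial r : ℝ) * Real.Gamma (1 / 2 + ((ν - r : ℕ) : ℝ)))) : ℝ) : ℂ) *
            (Dq^[r] (PowerSeries.mk a)) *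
            (Dq^[ν - r] (PowerSeries.mk fun j => (rOne j : ℂ)))) =
      (Nat.choose (2 * ν) ν : ℂ) *
        ∑ x ∈ (Finset.Icc (-(4 * (n : ℤ))) (4 * (n : ℤ))).filter
            (fun x : ℤ => x ^ 2 ≤ 4 * (n : ℤ)),
          (∑ j ∈ Finset.range (ν + 1),
              (-1 : ℂ) ^ j * (Nat.choose (2 * ν - j) j : ℂ) * (n : ℂ) ^ j *
                (x : ℂ) ^ (2 * ν - 2 * j)) *
            a (4 * n - x.natAbs ^ 2) := by
  rw [coeff_sum_C_mul_iterate_Dq_mul, ← Nat.sum_antidiagonal_swap,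
    Nat.sum_antidiagonal_eq_sum_range_succ_mk]
  simp only [Prod.swap, PowerSeries.coeff_mk]
  rw [sum_range_rOne_mul, Nat.cast_mul, Nat.cast_ofNat, mul_sum]
  refine sum_congr rfl fun x hx => ?_
  have hx₂ : x.natAbs ^ 2 ≤ 4 * n := by
    have := (mem_filter.mp hx).2
    rw [← Int.natAbs_sq] at this
    exact_mod_cast this
  have hcast : ((x.natAbs ^ 2 : ℕ) : ℂ) = (x : ℂ) ^ 2 := by
    rw [← Int.cast_natCast, Nat.cast_pow, Int.natAbs_sq, Int.cast_pow]
  rw [Nat.cast_sub hx₂, hcast, Nat.cast_mul, Nat.cast_ofNat,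
    sum_congr rfl fun r hr => by
      rw [rankinCohen_coeff_eq ν r (Nat.lt_succ_iff.mp (mem_range.mp hr))]]
  push_cast
  rw [sum_rankinCohen_coeff_mul_pow]
  ring
end
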